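/- arXiv:2301.04029 — 8 statements merged into one kernel-verified Lean document; each statement's English description precedes it below -/
import Mathlib

section
/- Every finite bipartite graph with strict preference orders on the edges incident to each vertex admits a stable matching. -/
/-- A finite bipartite graph with strict preference orders.
Vertices on one side have type `I` ("men"), on the other side `J` ("women").
Edges are pairs `(m, w) : I × J`; the edge set is `E`.
`pI m e f` means vertex `m ∈ I` strictly prefers edge `e` to edge `f`
(both incident to `m`); similarly `pJ` for the `J` side.
The axioms say that each `pI m` (resp. `pJ w`) is a strict linear order
on the set `δ(m)` (resp. `δ(w)`) of edges of `E` incident to the vertex. -/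
structure PrefSystem (I J : Type) where
  E : Finset (I × J)
  pI : I → (I × J) → (I × J) → Prop
  pJ : J → (I × J) → (I × J) → Prop
  pI_irrefl : ∀ m e, ¬ pI m e e
  pI_trans : ∀ m e f g, pI m e f → pI m f g → pI m e g
  pI_total : ∀ m e f, e ∈ E → f ∈ E → e.1 = m → f.1 = m → e ≠ f → pI m e f ∨ pI m f e
  pJ_irrefl : ∀ w e, ¬ pJ w e e
  pJ_trans : ∀ w e f g, pJ w e f → pJ w f g → pJ w e g
  pJ_total : ∀ w e f, e ∈ E → f ∈ E → e.2 = w → f.2 = w → e ≠ f → pJ w e f ∨ pJ w f e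

variable {I J : Type}

/-- `M` is a matching: a set of edges of `G`, no two of which share a vertex. -/
def IsMatching (G : PrefSystem I J) (M : Finset (I × J)) : Prop :=
  M ⊆ G.E ∧ ∀ e ∈ M, ∀ f ∈ M, e ≠ f → e.1 ≠ f.1 ∧ e.2 ≠ f.2

/-- The edge `e ∈ E \ M` blocks `M` if, for each endpoint `v` of `e`,
either `v` is uncovered by `M` or `v` strictly prefers `e` to its `M`-edge. -/
def Blocks (G : PrefSystem I J) (M : Finset (I × J)) (e : I × J) : Prop :=
  e ∈ G.E ∧ e ∉ M ∧ (∀ f ∈ M, f.1 = e.1 → G.pI e.1 e f) ∧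
    (∀ f ∈ M, f.2 = e.2 → G.pJ e.2 e f)

/-- A stable matching: a matching with no blocking edge. -/
def IsStable (G : PrefSystem I J) (M : Finset (I × J)) : Prop :=
  IsMatching G M ∧ ∀ e, ¬ Blocks G M e

/-- A finite set totally ordered by a transitive relation has a greatest element. -/
lemma exists_top {α : Type*} [DecidableEq α] (r : α → α → Prop)
    (htrans : ∀ e f g, r e f → r f g → r e g) :
    ∀ s : Finset α, (∀ e ∈ s, ∀ f ∈ s, e ≠ f → r e f ∨ r f e) → s.Nonempty →
      ∃ t ∈ s, ∀ f ∈ s, f ≠ t → r t f := by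
  intro s
  induction s using Finset.induction_on with
  | empty => intro _ h; exact absurd h (by simp)
  | @insert a t ha ih =>
    intro htot _
    by_cases ht : t.Nonempty
    · obtain ⟨b, hb, hbtop⟩ := ih
        (fun e he f hf => htot e (Finset.mem_insert_of_mem he) f (Finset.mem_insert_of_mem hf)) ht
      have hab : a ≠ b := fun h => ha (h ▸ hb)
      rcases htot a (Finset.mem_insert_self _ _) b (Finset.mem_insert_of_mem hb) hab with h | h
      · refine ⟨a, Finset.mem_insert_self _ _, fun f hf hfa => ?_⟩
        rcases Finset.mem_insert.mp hf with rfl | hft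
        · exact absurd rfl hfa
        · by_cases hfb : f = b
          · exact hfb ▸ h
          · exact htrans _ _ _ h (hbtop f hft hfb)
      · refine ⟨b, Finset.mem_insert_of_mem hb, fun f hf hfb => ?_⟩
        rcases Finset.mem_insert.mp hf with rfl | hft
        · exact h
        · exact hbtop f hft hfb
    · refine ⟨a, Finset.mem_insert_self _ _, fun f hf hfa => ?_⟩
      rcases Finset.mem_insert.mp hf with rfl | hft
      · exact absurd rfl hfa
      · exact absurd ⟨f, hft⟩ ht

/-- Every finite bipartite graph with strict preference orders on the
edges incident to each vertex admits a stable matching. -/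
theorem stable_matching_exists {I J : Type} [Fintype I] [Fintype J]
    [DecidableEq I] [DecidableEq J] (G : PrefSystem I J) :
    ∃ M : Finset (I × J), IsStable G M := by
  classical
  suffices h : ∀ (n : ℕ) (G : PrefSystem I J), G.E.card ≤ n → ∃ M, IsStable G M from
    h G.E.card G le_rfl
  intro n
  induction n with
  | zero =>
    intro G hG
    have hE : G.E = ∅ := Finset.card_eq_zero.mp (Nat.le_zero.mp hG)
    refine ⟨∅, ⟨Finset.empty_subset _, by simp⟩, fun e he => ?_⟩
    exact absurd he.1 (by simp [hE])
  | succ n ih =>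
    intro G hG
    -- `Top e` : `e` is the favourite edge of the man `e.1`.
    set Top : (I × J) → Prop :=
      fun e => ∀ g ∈ G.E, g.1 = e.1 → g ≠ e → G.pI e.1 e g with hTopDef
    by_cases hA : ∃ e ∈ G.E, Top e ∧ ∃ f ∈ G.E, f.2 = e.2 ∧ G.pJ e.2 e f
    · -- the woman `e.2` rejects all edges she likes strictly less than `e`
      obtain ⟨e, heE, hetop, f, hfE, hf2, hpf⟩ := hA
      set D : Finset (I × J) := G.E.filter (fun g => g.2 = e.2 ∧ G.pJ e.2 e g) with hD
      have heD : e ∉ D := by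
        simp only [hD, Finset.mem_filter]
        rintro ⟨-, -, h⟩
        exact G.pJ_irrefl e.2 e h
      have hDne : D.Nonempty := ⟨f, by simp [hD, hfE, hf2, hpf]⟩
      set G' : PrefSystem I J :=
        { E := G.E \ D
          pI := G.pI, pJ := G.pJ
          pI_irrefl := G.pI_irrefl, pI_trans := G.pI_trans
          pJ_irrefl := G.pJ_irrefl, pJ_trans := G.pJ_trans
          pI_total := fun m a b haE hbE =>
            G.pI_total m a b (Finset.mem_sdiff.mp haE).1 (Finset.mem_sdiff.mp hbE).1
          pJ_total := fun w a b haE hbE =>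
            G.pJ_total w a b (Finset.mem_sdiff.mp haE).1 (Finset.mem_sdiff.mp hbE).1 } with hG'
      have hcard : G'.E.card ≤ n := by
        have hss : G.E \ D ⊂ G.E := Finset.sdiff_ssubset (Finset.filter_subset _ _) hDne
        have := Finset.card_lt_card hss
        have hE' : G'.E = G.E \ D := rfl
        rw [hE']
        omega
      obtain ⟨M, hMmatch, hMstable⟩ := ih G' hcard
      have hsub : G'.E ⊆ G.E := Finset.sdiff_subset
      refine ⟨M, ⟨hMmatch.1.trans hsub, hMmatch.2⟩, ?_⟩
      rintro b ⟨hbE, hbM, hbm, hbw⟩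
      by_cases hbE' : b ∈ G'.E
      · exact hMstable b ⟨hbE', hbM, hbm, hbw⟩
      · have hbD : b ∈ D := by
          have : b ∉ G.E \ D := hbE'
          simp only [Finset.mem_sdiff, hbE, true_and, not_not] at this
          exact this
        obtain ⟨-, hb2, hpb⟩ := Finset.mem_filter.mp hbD
        -- the woman `e.2` must be matched in `M`
        have hcov : ∃ g ∈ M, g.2 = e.2 := by
          by_contra hnc
          push_neg at hnc
          have heE' : e ∈ G'.E := Finset.mem_sdiff.mpr ⟨heE, heD⟩
          have heM : e ∉ M := fun h => hnc e h rfl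
          refine hMstable e ⟨heE', heM, ?_, ?_⟩
          · intro g hg hg1
            exact hetop g (hsub (hMmatch.1 hg)) hg1 (fun h => heM (h ▸ hg))
          · intro g hg hg2
            exact absurd hg2 (hnc g hg)
        obtain ⟨g, hgM, hg2⟩ := hcov
        have hgND : g ∉ D := (Finset.mem_sdiff.mp (hMmatch.1 hgM)).2
        have hfg : G.pJ b.2 b g := hbw g hgM (hg2.trans hb2.symm)
        have : G.pJ e.2 e g := G.pJ_trans e.2 e b g hpb (hb2 ▸ hfg)
        exact hgND (Finset.mem_filter.mpr ⟨hsub (hMmatch.1 hgM), hg2, this⟩)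
    · -- fixed point: the set of favourite edges is a stable matching
      push_neg at hA
      set M : Finset (I × J) := G.E.filter Top with hM
      have hMsub : M ⊆ G.E := Finset.filter_subset _ _
      have hmatch : IsMatching G M := by
        refine ⟨hMsub, ?_⟩
        intro a ha b hb hab
        obtain ⟨haE, hatop⟩ := Finset.mem_filter.mp ha
        obtain ⟨hbE, hbtop⟩ := Finset.mem_filter.mp hb
        constructor
        · intro h1
          have h2 : G.pI a.1 a b := hatop b hbE h1.symm (Ne.symm hab)
          have h3 : G.pI b.1 b a := hbtop a haE h1 hab
          rw [h1.symm] at h3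
          exact G.pI_irrefl a.1 a (G.pI_trans a.1 a b a h2 h3)
        · intro h2
          rcases G.pJ_total a.2 a b haE hbE rfl h2.symm hab with h | h
          · exact hA a haE hatop b hbE h2.symm h
          · exact hA b hbE hbtop a haE h2 (by rwa [h2] at h)
      refine ⟨M, hmatch, ?_⟩
      rintro b ⟨hbE, hbM, hbm, -⟩
      -- the man `b.1` has a favourite edge `t ∈ M`
      set s : Finset (I × J) := G.E.filter (fun g => g.1 = b.1) with hs
      have hbs : b ∈ s := Finset.mem_filter.mpr ⟨hbE, rfl⟩
      obtain ⟨t, hts, httop⟩ := exists_top (G.pI b.1) (G.pI_trans b.1) s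
        (fun x hx y hy hxy =>
          G.pI_total b.1 x y (Finset.mem_filter.mp hx).1 (Finset.mem_filter.mp hy).1
            (Finset.mem_filter.mp hx).2 (Finset.mem_filter.mp hy).2 hxy)
        ⟨b, hbs⟩
      obtain ⟨htE, ht1⟩ := Finset.mem_filter.mp hts
      have htM : t ∈ M := by
        refine Finset.mem_filter.mpr ⟨htE, ?_⟩
        intro g hgE hg1 hgt
        have hgs : g ∈ s := Finset.mem_filter.mpr ⟨hgE, hg1.trans ht1⟩
        have := httop g hgs hgt
        rwa [ht1]
      have htb : t ≠ b := fun h => hbM (h ▸ htM)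
      have h1 : G.pI b.1 b t := hbm t htM ht1
      have h2 : G.pI b.1 t b := httop b hbs (Ne.symm htb)
      exact G.pI_irrefl b.1 b (G.pI_trans b.1 b t b h1 h2)
end

section
/- If M and L are two stable matchings of a bipartite graph with preferences, then M and L cover exactly the same set of vertices. -/
variable {I J : Type}

lemma covered_I_aux {I J : Type} [Fintype I] [Fintype J] {G : PrefSystem I J}
    {M L : Finset (I × J)} (hM : IsStable G M) (hL : IsStable G L) {m : I}
    (h : ∃ e ∈ M, e.1 = m) : ∃ e ∈ L, e.1 = m := by
  classical
  by_contra hnc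
  push_neg at hnc
  obtain ⟨⟨hMsub, hMmat⟩, hMst⟩ := hM
  obtain ⟨⟨hLsub, hLmat⟩, hLst⟩ := hL
  have uniqM2 : ∀ e ∈ M, ∀ f ∈ M, e.2 = f.2 → e = f := by
    intro e he f hf h2; by_contra hne; exact (hMmat e he f hf hne).2 h2
  have uniqL1 : ∀ e ∈ L, ∀ f ∈ L, e.1 = f.1 → e = f := by
    intro e he f hf h1; by_contra hne; exact (hLmat e he f hf hne).1 h1
  have key : ∀ s : {e : I × J // e ∈ M ∧ ∀ g ∈ L, g.1 = e.1 → G.pI e.1 e g},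
      ∃ (e' : {e : I × J // e ∈ M ∧ ∀ g ∈ L, g.1 = e.1 → G.pI e.1 e g}) (f : I × J),
        f ∈ L ∧ f.2 = s.val.2 ∧ e'.val.1 = f.1 := by
    rintro ⟨e, heM, hPref⟩
    have heL : e ∉ L := fun heL => G.pI_irrefl e.1 e (hPref e heL rfl)
    have heE : e ∈ G.E := hMsub heM
    have hJfail : ¬ (∀ f ∈ L, f.2 = e.2 → G.pJ e.2 e f) :=
      fun hJ => hLst e ⟨heE, heL, hPref, hJ⟩
    push_neg at hJfail
    obtain ⟨f, hfL, hf2, hnpJ⟩ := hJfail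
    have hfne : f ≠ e := fun hh => heL (hh ▸ hfL)
    have hpJ : G.pJ e.2 f e := by
      rcases G.pJ_total e.2 f e (hLsub hfL) heE hf2 rfl hfne with hh | hh
      · exact hh
      · exact absurd hh hnpJ
    have hfM : f ∉ M := fun hfM => hfne (uniqM2 f hfM e heM hf2)
    have hJside : ∀ g ∈ M, g.2 = f.2 → G.pJ f.2 f g := by
      intro g hgM hg2
      have hge : g = e := uniqM2 g hgM e heM (hg2.trans hf2)
      subst hge
      rw [hf2]; exact hpJ
    have hIfail : ¬ (∀ g ∈ M, g.1 = f.1 → G.pI f.1 f g) :=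
      fun hIside => hMst f ⟨hLsub hfL, hfM, hIside, hJside⟩
    push_neg at hIfail
    obtain ⟨e', he'M, he'1, hnpI⟩ := hIfail
    have he'ne : e' ≠ f := fun hh => hfM (hh ▸ he'M)
    have hpI : G.pI f.1 e' f := by
      rcases G.pI_total f.1 e' f (hMsub he'M) (hLsub hfL) he'1 rfl he'ne with hh | hh
      · exact hh
      · exact absurd hh hnpI
    refine ⟨⟨e', he'M, ?_⟩, f, hfL, hf2, he'1⟩
    intro g hgL hg1
    have hgf : g = f := uniqL1 g hgL f hfL (hg1.trans he'1)
    subst hgf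
    rw [he'1]; exact hpI
  choose step fOf hfL hf2 hf1 using key
  obtain ⟨e0, he0M, he01⟩ := h
  have hP0 : ∀ g ∈ L, g.1 = e0.1 → G.pI e0.1 e0 g := by
    intro g hgL hg1
    exact absurd (hg1.trans he01) (hnc g hgL)
  set s0 : {e : I × J // e ∈ M ∧ ∀ g ∈ L, g.1 = e.1 → G.pI e.1 e g} := ⟨e0, he0M, hP0⟩
    with hs0
  set seq : ℕ → {e : I × J // e ∈ M ∧ ∀ g ∈ L, g.1 = e.1 → G.pI e.1 e g} :=
    fun n => step^[n] s0 with hseqdef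
  have hseq : ∀ n, seq (n + 1) = step (seq n) := fun n =>
    Function.iterate_succ_apply' step n s0
  have hback : ∀ s t, (step s).val = (step t).val → s.val = t.val := by
    intro s t hst
    have hff : fOf s = fOf t :=
      uniqL1 _ (hfL s) _ (hfL t) (by rw [← hf1 s, ← hf1 t, hst])
    exact uniqM2 _ s.prop.1 _ t.prop.1 (by rw [← hf2 s, ← hf2 t, hff])
  have hnr : ∀ s, (step s).val.1 ≠ m := by
    intro s hh
    exact hnc (fOf s) (hfL s) (by rw [← hf1 s]; exact hh)
  have hinj : ∀ i j, (seq i).val = (seq j).val → i = j := by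
    intro i
    induction i with
    | zero =>
      intro j hij
      cases j with
      | zero => rfl
      | succ j =>
        exfalso
        apply hnr (seq j)
        rw [← hseq j, ← hij]
        exact he01
    | succ i ih =>
      intro j hij
      cases j with
      | zero =>
        exfalso
        apply hnr (seq i)
        rw [← hseq i, hij]
        exact he01
      | succ j =>
        have := hback (seq i) (seq j) (by rw [← hseq i, ← hseq j]; exact hij)
        exact congrArg Nat.succ (ih j this)
  obtain ⟨x, y, hxy, hval⟩ :=
    Finite.exists_ne_map_eq_of_infinite (fun n => (seq n).val)
  exact hxy (hinj x y hval)

lemma covered_J_aux {I J : Type} [Fintype I] [Fintype J] {G : PrefSystem I J}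
    {M L : Finset (I × J)} (hM : IsStable G M) (hL : IsStable G L) {w : J}
    (h : ∃ e ∈ M, e.2 = w) : ∃ e ∈ L, e.2 = w := by
  classical
  by_contra hnc
  push_neg at hnc
  obtain ⟨⟨hMsub, hMmat⟩, hMst⟩ := hM
  obtain ⟨⟨hLsub, hLmat⟩, hLst⟩ := hL
  have uniqM1 : ∀ e ∈ M, ∀ f ∈ M, e.1 = f.1 → e = f := by
    intro e he f hf h1; by_contra hne; exact (hMmat e he f hf hne).1 h1
  have uniqL2 : ∀ e ∈ L, ∀ f ∈ L, e.2 = f.2 → e = f := by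
    intro e he f hf h2; by_contra hne; exact (hLmat e he f hf hne).2 h2
  have key : ∀ s : {e : I × J // e ∈ M ∧ ∀ g ∈ L, g.2 = e.2 → G.pJ e.2 e g},
      ∃ (e' : {e : I × J // e ∈ M ∧ ∀ g ∈ L, g.2 = e.2 → G.pJ e.2 e g}) (f : I × J),
        f ∈ L ∧ f.1 = s.val.1 ∧ e'.val.2 = f.2 := by
    rintro ⟨e, heM, hPref⟩
    have heL : e ∉ L := fun heL => G.pJ_irrefl e.2 e (hPref e heL rfl)
    have heE : e ∈ G.E := hMsub heM
    have hIfail : ¬ (∀ f ∈ L, f.1 = e.1 → G.pI e.1 e f) :=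
      fun hI => hLst e ⟨heE, heL, hI, hPref⟩
    push_neg at hIfail
    obtain ⟨f, hfL, hf1, hnpI⟩ := hIfail
    have hfne : f ≠ e := fun hh => heL (hh ▸ hfL)
    have hpI : G.pI e.1 f e := by
      rcases G.pI_total e.1 f e (hLsub hfL) heE hf1 rfl hfne with hh | hh
      · exact hh
      · exact absurd hh hnpI
    have hfM : f ∉ M := fun hfM => hfne (uniqM1 f hfM e heM hf1)
    have hIside : ∀ g ∈ M, g.1 = f.1 → G.pI f.1 f g := by
      intro g hgM hg1
      have hge : g = e := uniqM1 g hgM e heM (hg1.trans hf1)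
      subst hge
      rw [hf1]; exact hpI
    have hJfail : ¬ (∀ g ∈ M, g.2 = f.2 → G.pJ f.2 f g) :=
      fun hJside => hMst f ⟨hLsub hfL, hfM, hIside, hJside⟩
    push_neg at hJfail
    obtain ⟨e', he'M, he'2, hnpJ⟩ := hJfail
    have he'ne : e' ≠ f := fun hh => hfM (hh ▸ he'M)
    have hpJ : G.pJ f.2 e' f := by
      rcases G.pJ_total f.2 e' f (hMsub he'M) (hLsub hfL) he'2 rfl he'ne with hh | hh
      · exact hh
      · exact absurd hh hnpJ
    refine ⟨⟨e', he'M, ?_⟩, f, hfL, hf1, he'2⟩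
    intro g hgL hg2
    have hgf : g = f := uniqL2 g hgL f hfL (hg2.trans he'2)
    subst hgf
    rw [he'2]; exact hpJ
  choose step fOf hfL hf1 hf2 using key
  obtain ⟨e0, he0M, he02⟩ := h
  have hP0 : ∀ g ∈ L, g.2 = e0.2 → G.pJ e0.2 e0 g := by
    intro g hgL hg2
    exact absurd (hg2.trans he02) (hnc g hgL)
  set s0 : {e : I × J // e ∈ M ∧ ∀ g ∈ L, g.2 = e.2 → G.pJ e.2 e g} := ⟨e0, he0M, hP0⟩
    with hs0
  set seq : ℕ → {e : I × J // e ∈ M ∧ ∀ g ∈ L, g.2 = e.2 → G.pJ e.2 e g} :=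
    fun n => step^[n] s0 with hseqdef
  have hseq : ∀ n, seq (n + 1) = step (seq n) := fun n =>
    Function.iterate_succ_apply' step n s0
  have hback : ∀ s t, (step s).val = (step t).val → s.val = t.val := by
    intro s t hst
    have hff : fOf s = fOf t :=
      uniqL2 _ (hfL s) _ (hfL t) (by rw [← hf2 s, ← hf2 t, hst])
    exact uniqM1 _ s.prop.1 _ t.prop.1 (by rw [← hf1 s, ← hf1 t, hff])
  have hnr : ∀ s, (step s).val.2 ≠ w := by
    intro s hh
    exact hnc (fOf s) (hfL s) (by rw [← hf2 s]; exact hh)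
  have hinj : ∀ i j, (seq i).val = (seq j).val → i = j := by
    intro i
    induction i with
    | zero =>
      intro j hij
      cases j with
      | zero => rfl
      | succ j =>
        exfalso
        apply hnr (seq j)
        rw [← hseq j, ← hij]
        exact he02
    | succ i ih =>
      intro j hij
      cases j with
      | zero =>
        exfalso
        apply hnr (seq i)
        rw [← hseq i, hij]
        exact he02
      | succ j =>
        have := hback (seq i) (seq j) (by rw [← hseq i, ← hseq j]; exact hij)
        exact congrArg Nat.succ (ih j this)
  obtain ⟨x, y, hxy, hval⟩ :=
    Finite.exists_ne_map_eq_of_infinite (fun n => (seq n).val)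
  exact hxy (hinj x y hval)

/-- two stable matchings of a bipartite graph with preferences
cover exactly the same set of vertices. -/
theorem stable_matchings_cover_same_vertices {I J : Type} [Fintype I] [Fintype J]
    [DecidableEq I] [DecidableEq J] (G : PrefSystem I J)
    (M L : Finset (I × J)) (hM : IsStable G M) (hL : IsStable G L) :
    (∀ m : I, (∃ e ∈ M, e.1 = m) ↔ (∃ e ∈ L, e.1 = m)) ∧
    (∀ w : J, (∃ e ∈ M, e.2 = w) ↔ (∃ e ∈ L, e.2 = w)) := by
  constructor
  · intro m
    exact ⟨covered_I_aux hM hL, covered_I_aux hL hM⟩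
  · intro w
    exact ⟨covered_J_aux hM hL, covered_J_aux hL hM⟩
end

section
/- Let M and L be stable matchings of a bipartite graph with preferences, and let e, e', e'' be three distinct edges of the symmetric difference M △ L such that e and e' share a vertex u and e' and e'' share a vertex v. If e' >_u e (i.e., u prefers e to e'), then e'' >_v e' (i.e., v prefers e' to e''). -/
variable {I J : Type}

theorem aux1 {I J : Type} [Fintype I] [Fintype J] (G : PrefSystem I J)
    (M L : Finset (I × J)) (hM : IsStable G M) (hL : IsStable G L)
    (e e' e'' : I × J)
    (heM : e ∈ M) (he'L : e' ∈ L) (he'M : e' ∉ M)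
    (he''M : e'' ∈ M) (he''L : e'' ∉ L)
    (h1 : e.1 = e'.1) (h2 : e'.2 = e''.2) (hp : G.pI e.1 e e') :
    G.pJ e'.2 e' e'' := by
  classical
  obtain ⟨⟨hMsub, hMmat⟩, hMst⟩ := hM
  obtain ⟨⟨hLsub, hLmat⟩, hLst⟩ := hL
  by_contra hcon
  have hnee : e' ≠ e'' := fun h => he'M (h ▸ he''M)
  have hpJ : G.pJ e'.2 e'' e' := by
    rcases G.pJ_total e'.2 e' e'' (hLsub he'L) (hMsub he''M) rfl h2.symm hnee with h | h
    · exact absurd h hcon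
    · exact h
  -- the key stepping lemma
  have key : ∀ g : I × J, (g ∈ M ∧ g ∉ L ∧ ∃ l, l ∈ L ∧ l.2 = g.2 ∧ G.pJ g.2 g l) →
      ∃ g', (g' ∈ M ∧ g' ∉ L ∧ ∃ l, l ∈ L ∧ l.2 = g'.2 ∧ G.pJ g'.2 g' l) ∧
        ∃ h, h ∈ L ∧ h.1 = g.1 ∧ h.2 = g'.2 ∧ h ≠ e' := by
    rintro g ⟨hgM, hgL, l, hlL, hl2, hlp⟩
    have hJcond : ∀ f ∈ L, f.2 = g.2 → G.pJ g.2 g f := by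
      intro f hf hf2
      have hfl : f = l := by
        by_contra hq
        exact (hLmat f hf l hlL hq).2 (hf2.trans hl2.symm)
      rw [hfl]; exact hlp
    have hC : ¬ (∀ f ∈ L, f.1 = g.1 → G.pI g.1 g f) := by
      intro hc
      exact hLst g ⟨hMsub hgM, hgL, hc, hJcond⟩
    push_neg at hC
    obtain ⟨h, hhL, hh1, hhnp⟩ := hC
    have hhg : h ≠ g := fun hq => hgL (hq ▸ hhL)
    have hpIh : G.pI g.1 h g := by
      rcases G.pI_total g.1 g h (hMsub hgM) (hLsub hhL) rfl hh1 (Ne.symm hhg) with t | t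
      · exact absurd t hhnp
      · exact t
    have hhne' : h ≠ e' := by
      rintro rfl
      have hge : g = e := by
        by_contra hq
        exact (hMmat g hgM e heM hq).1 (hh1 ▸ h1).symm
      subst hge
      exact G.pI_irrefl g.1 g (G.pI_trans g.1 g h g hp hpIh)
    have hhM : h ∉ M := fun hq => (hMmat h hq g hgM hhg).1 hh1
    have hIcond : ∀ f ∈ M, f.1 = h.1 → G.pI h.1 h f := by
      intro f hf hf1
      have hfg : f = g := by
        by_contra hq
        exact (hMmat f hf g hgM hq).1 (hf1.trans hh1)
      subst hfg
      rw [hh1]; exact hpIh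
    have hD : ¬ (∀ f ∈ M, f.2 = h.2 → G.pJ h.2 h f) := by
      intro hd
      exact hMst h ⟨hLsub hhL, hhM, hIcond, hd⟩
    push_neg at hD
    obtain ⟨g', hg'M, hg'2, hg'np⟩ := hD
    have hg'h : g' ≠ h := fun hq => hhM (hq ▸ hg'M)
    have hpJ' : G.pJ h.2 g' h := by
      rcases G.pJ_total h.2 h g' (hLsub hhL) (hMsub hg'M) rfl hg'2 (Ne.symm hg'h) with t | t
      · exact absurd t hg'np
      · exact t
    have hg'L : g' ∉ L := fun hq => (hLmat g' hq h hhL hg'h).2 hg'2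
    exact ⟨g', ⟨hg'M, hg'L, h, hhL, hg'2.symm, hg'2 ▸ hpJ'⟩,
      h, hhL, hh1, hg'2.symm, hhne'⟩
  -- set up the infinite sequence
  set T := {x : I × J // x ∈ M ∧ x ∉ L ∧ ∃ l, l ∈ L ∧ l.2 = x.2 ∧ G.pJ x.2 x l} with hT
  let x0 : T := ⟨e'', he''M, he''L, e', he'L, h2, h2 ▸ hpJ⟩
  let f : T → T := fun g => ⟨(key g.1 g.2).choose, ((key g.1 g.2).choose_spec).1⟩
  have linkspec : ∀ a : T, ∃ h, h ∈ L ∧ h.1 = a.1.1 ∧ h.2 = (f a).1.2 ∧ h ≠ e' :=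
    fun a => ((key a.1 a.2).choose_spec).2
  have finj : Function.Injective f := by
    intro a b hab
    obtain ⟨ha, haL, ha1, ha2, hane⟩ := linkspec a
    obtain ⟨hb, hbL, hb1, hb2, hbne⟩ := linkspec b
    have hab2 : ha.2 = hb.2 := by rw [ha2, hb2, hab]
    have habeq : ha = hb := by
      by_contra hq
      exact (hLmat ha haL hb hbL hq).2 hab2
    have h11 : a.1.1 = b.1.1 := by rw [← ha1, habeq, hb1]
    have : a.1 = b.1 := by
      by_contra hq
      exact (hMmat a.1 a.2.1 b.1 b.2.1 hq).1 h11
    exact Subtype.ext this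
  obtain ⟨n, m, hnm, heqm⟩ := Finite.exists_ne_map_eq_of_infinite (fun n : ℕ => f^[n] x0)
  wlog hlt : n < m generalizing n m
  · exact this m n (Ne.symm hnm) heqm.symm (by omega)
  obtain ⟨d, rfl⟩ : ∃ d, m = n + (d + 1) := ⟨m - n - 1, by omega⟩
  simp only [Function.iterate_add_apply] at heqm
  have hret1 : f^[d + 1] x0 = x0 := by
    rw [Function.iterate_succ_apply]
    simpa using finj.iterate n heqm.symm
  have hret : f (f^[d] x0) = x0 :=
    (Function.iterate_succ_apply' f d x0).symm.trans hret1
  obtain ⟨h, hhL, hh1, hh2, hhne⟩ := linkspec (f^[d] x0)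
  rw [hret] at hh2
  exact hhne (by
    by_contra hq
    have hx : h.2 = e''.2 := hh2
    exact (hLmat h hhL e' he'L hq).2 (hx.trans h2.symm))

theorem aux2 {I J : Type} [Fintype I] [Fintype J] (G : PrefSystem I J)
    (M L : Finset (I × J)) (hM : IsStable G M) (hL : IsStable G L)
    (e e' e'' : I × J)
    (heM : e ∈ M) (he'L : e' ∈ L) (he'M : e' ∉ M)
    (he''M : e'' ∈ M) (he''L : e'' ∉ L)
    (h1 : e.2 = e'.2) (h2 : e'.1 = e''.1) (hp : G.pJ e.2 e e') :
    G.pI e'.1 e' e'' := by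
  classical
  obtain ⟨⟨hMsub, hMmat⟩, hMst⟩ := hM
  obtain ⟨⟨hLsub, hLmat⟩, hLst⟩ := hL
  by_contra hcon
  have hnee : e' ≠ e'' := fun h => he'M (h ▸ he''M)
  have hpI : G.pI e'.1 e'' e' := by
    rcases G.pI_total e'.1 e' e'' (hLsub he'L) (hMsub he''M) rfl h2.symm hnee with h | h
    · exact absurd h hcon
    · exact h
  have key : ∀ g : I × J, (g ∈ M ∧ g ∉ L ∧ ∃ l, l ∈ L ∧ l.1 = g.1 ∧ G.pI g.1 g l) →
      ∃ g', (g' ∈ M ∧ g' ∉ L ∧ ∃ l, l ∈ L ∧ l.1 = g'.1 ∧ G.pI g'.1 g' l) ∧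
        ∃ h, h ∈ L ∧ h.2 = g.2 ∧ h.1 = g'.1 ∧ h ≠ e' := by
    rintro g ⟨hgM, hgL, l, hlL, hl1, hlp⟩
    have hIcond0 : ∀ f ∈ L, f.1 = g.1 → G.pI g.1 g f := by
      intro f hf hf1
      have hfl : f = l := by
        by_contra hq
        exact (hLmat f hf l hlL hq).1 (hf1.trans hl1.symm)
      rw [hfl]; exact hlp
    have hC : ¬ (∀ f ∈ L, f.2 = g.2 → G.pJ g.2 g f) := by
      intro hc
      exact hLst g ⟨hMsub hgM, hgL, hIcond0, hc⟩
    push_neg at hC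
    obtain ⟨h, hhL, hh2, hhnp⟩ := hC
    have hhg : h ≠ g := fun hq => hgL (hq ▸ hhL)
    have hpJh : G.pJ g.2 h g := by
      rcases G.pJ_total g.2 g h (hMsub hgM) (hLsub hhL) rfl hh2 (Ne.symm hhg) with t | t
      · exact absurd t hhnp
      · exact t
    have hhne' : h ≠ e' := by
      rintro rfl
      have hge : g = e := by
        by_contra hq
        exact (hMmat g hgM e heM hq).2 (hh2 ▸ h1).symm
      subst hge
      exact G.pJ_irrefl g.2 g (G.pJ_trans g.2 g h g hp hpJh)
    have hhM : h ∉ M := fun hq => (hMmat h hq g hgM hhg).2 hh2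
    have hJcond2 : ∀ f ∈ M, f.2 = h.2 → G.pJ h.2 h f := by
      intro f hf hf2
      have hfg : f = g := by
        by_contra hq
        exact (hMmat f hf g hgM hq).2 (hf2.trans hh2)
      subst hfg
      rw [hh2]; exact hpJh
    have hD : ¬ (∀ f ∈ M, f.1 = h.1 → G.pI h.1 h f) := by
      intro hd
      exact hMst h ⟨hLsub hhL, hhM, hd, hJcond2⟩
    push_neg at hD
    obtain ⟨g', hg'M, hg'1, hg'np⟩ := hD
    have hg'h : g' ≠ h := fun hq => hhM (hq ▸ hg'M)
    have hpI' : G.pI h.1 g' h := by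
      rcases G.pI_total h.1 h g' (hLsub hhL) (hMsub hg'M) rfl hg'1 (Ne.symm hg'h) with t | t
      · exact absurd t hg'np
      · exact t
    have hg'L : g' ∉ L := fun hq => (hLmat g' hq h hhL hg'h).1 hg'1
    exact ⟨g', ⟨hg'M, hg'L, h, hhL, hg'1.symm, hg'1 ▸ hpI'⟩,
      h, hhL, hh2, hg'1.symm, hhne'⟩
  set T := {x : I × J // x ∈ M ∧ x ∉ L ∧ ∃ l, l ∈ L ∧ l.1 = x.1 ∧ G.pI x.1 x l} with hT
  let x0 : T := ⟨e'', he''M, he''L, e', he'L, h2, h2 ▸ hpI⟩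
  let f : T → T := fun g => ⟨(key g.1 g.2).choose, ((key g.1 g.2).choose_spec).1⟩
  have linkspec : ∀ a : T, ∃ h, h ∈ L ∧ h.2 = a.1.2 ∧ h.1 = (f a).1.1 ∧ h ≠ e' :=
    fun a => ((key a.1 a.2).choose_spec).2
  have finj : Function.Injective f := by
    intro a b hab
    obtain ⟨ha, haL, ha2, ha1, hane⟩ := linkspec a
    obtain ⟨hb, hbL, hb2, hb1, hbne⟩ := linkspec b
    have hab1 : ha.1 = hb.1 := by rw [ha1, hb1, hab]
    have habeq : ha = hb := by
      by_contra hq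
      exact (hLmat ha haL hb hbL hq).1 hab1
    have h22 : a.1.2 = b.1.2 := by rw [← ha2, habeq, hb2]
    have : a.1 = b.1 := by
      by_contra hq
      exact (hMmat a.1 a.2.1 b.1 b.2.1 hq).2 h22
    exact Subtype.ext this
  obtain ⟨n, m, hnm, heqm⟩ := Finite.exists_ne_map_eq_of_infinite (fun n : ℕ => f^[n] x0)
  wlog hlt : n < m generalizing n m
  · exact this m n (Ne.symm hnm) heqm.symm (by omega)
  obtain ⟨d, rfl⟩ : ∃ d, m = n + (d + 1) := ⟨m - n - 1, by omega⟩
  simp only [Function.iterate_add_apply] at heqm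
  have hret1 : f^[d + 1] x0 = x0 := by
    rw [Function.iterate_succ_apply]
    simpa using finj.iterate n heqm.symm
  have hret : f (f^[d] x0) = x0 :=
    (Function.iterate_succ_apply' f d x0).symm.trans hret1
  obtain ⟨h, hhL, hh2, hh1, hhne⟩ := linkspec (f^[d] x0)
  rw [hret] at hh1
  exact hhne (by
    by_contra hq
    have hx : h.1 = e''.1 := hh1
    exact (hLmat h hhL e' he'L hq).1 (hx.trans h2.symm))

/-- for distinct edges `e, e', e''` of `M △ L` with `e, e'` sharing a
vertex `u` and `e', e''` sharing a vertex `v`, if `u` prefers `e` to `e'` then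
`v` prefers `e'` to `e''`.  (The shared vertex may lie on either side of the
bipartition; both cases are stated.) -/
theorem symmDiff_preferences_propagate {I J : Type} [Fintype I] [Fintype J]
    [DecidableEq I] [DecidableEq J] (G : PrefSystem I J)
    (M L : Finset (I × J)) (hM : IsStable G M) (hL : IsStable G L)
    (e e' e'' : I × J)
    (he : e ∈ symmDiff M L) (he' : e' ∈ symmDiff M L) (he'' : e'' ∈ symmDiff M L)
    (hne : e ≠ e') (hne' : e' ≠ e'') (hne'' : e ≠ e'') :
    ((e.1 = e'.1 → e'.2 = e''.2 → G.pI e.1 e e' → G.pJ e'.2 e' e'') ∧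
     (e.2 = e'.2 → e'.1 = e''.1 → G.pJ e.2 e e' → G.pI e'.1 e' e'')) := by
  
  rw [Finset.mem_symmDiff] at he he' he''
  constructor
  · intro h1 h2 hp
    rcases he with ⟨heM, heL⟩ | ⟨heL, heM⟩
    · have he'c : e' ∈ L ∧ e' ∉ M := by
        rcases he' with ⟨h'M, h'L⟩ | ⟨h'L, h'M⟩
        · exact absurd h1 ((hM.1.2 e heM e' h'M hne).1)
        · exact ⟨h'L, h'M⟩
      have he''c : e'' ∈ M ∧ e'' ∉ L := by
        rcases he'' with ⟨h''M, h''L⟩ | ⟨h''L, h''M⟩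
        · exact ⟨h''M, h''L⟩
        · exact absurd h2 ((hL.1.2 e' he'c.1 e'' h''L hne').2)
      exact aux1 G M L hM hL e e' e'' heM he'c.1 he'c.2 he''c.1 he''c.2 h1 h2 hp
    · have he'c : e' ∈ M ∧ e' ∉ L := by
        rcases he' with ⟨h'M, h'L⟩ | ⟨h'L, h'M⟩
        · exact ⟨h'M, h'L⟩
        · exact absurd h1 ((hL.1.2 e heL e' h'L hne).1)
      have he''c : e'' ∈ L ∧ e'' ∉ M := by
        rcases he'' with ⟨h''M, h''L⟩ | ⟨h''L, h''M⟩
        · exact absurd h2 ((hM.1.2 e' he'c.1 e'' h''M hne').2)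
        · exact ⟨h''L, h''M⟩
      exact aux1 G L M hL hM e e' e'' heL he'c.1 he'c.2 he''c.1 he''c.2 h1 h2 hp
  · intro h1 h2 hp
    rcases he with ⟨heM, heL⟩ | ⟨heL, heM⟩
    · have he'c : e' ∈ L ∧ e' ∉ M := by
        rcases he' with ⟨h'M, h'L⟩ | ⟨h'L, h'M⟩
        · exact absurd h1 ((hM.1.2 e heM e' h'M hne).2)
        · exact ⟨h'L, h'M⟩
      have he''c : e'' ∈ M ∧ e'' ∉ L := by
        rcases he'' with ⟨h''M, h''L⟩ | ⟨h''L, h''M⟩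
        · exact ⟨h''M, h''L⟩
        · exact absurd h2 ((hL.1.2 e' he'c.1 e'' h''L hne').1)
      exact aux2 G M L hM hL e e' e'' heM he'c.1 he'c.2 he''c.1 he''c.2 h1 h2 hp
    · have he'c : e' ∈ M ∧ e' ∉ L := by
        rcases he' with ⟨h'M, h'L⟩ | ⟨h'L, h'M⟩
        · exact ⟨h'M, h'L⟩
        · exact absurd h1 ((hL.1.2 e heL e' h'L hne).2)
      have he''c : e'' ∈ L ∧ e'' ∉ M := by
        rcases he'' with ⟨h''M, h''L⟩ | ⟨h''L, h''M⟩
        · exact absurd h2 ((hM.1.2 e' he'c.1 e'' h''M hne').1)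
        · exact ⟨h''L, h''M⟩
      exact aux2 G L M hL hM e e' e'' heL he'c.1 he'c.2 he''c.1 he''c.2 h1 h2 hp
end

section
/- For two stable matchings M and L of a bipartite graph, the symmetric difference M △ L is a disjoint union of cycles (every vertex of the subgraph induced by M △ L has degree exactly 2 in it). -/
variable {I J : Type}

-- helper: iterates of an injective map starting outside range are injective
lemma iter_inj_aux {α : Type*} {f : α → α} (hf : Function.Injective f) {a : α}
    (ha : ∀ x, f x ≠ a) : Function.Injective (fun n => f^[n] a) := by
  intro j k h
  induction j generalizing k with
  | zero =>
    cases k with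
    | zero => rfl
    | succ k =>
      simp only [Function.iterate_zero, id_eq, Function.iterate_succ_apply'] at h
      exact absurd h.symm (ha _)
  | succ j ih =>
    cases k with
    | zero =>
      simp only [Function.iterate_zero, id_eq, Function.iterate_succ_apply'] at h
      exact absurd h (ha _)
    | succ k =>
      simp only [Function.iterate_succ_apply'] at h
      exact congrArg Nat.succ (ih (hf h))

/-- Lone-wolf: if `m` is covered by stable `M`, it is covered by stable `L`. -/
lemma covered_of_covered [Finite I] [Finite J] {G : PrefSystem I J}
    {M L : Finset (I × J)} (hM : IsStable G M) (hL : IsStable G L)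
    {e : I × J} (he : e ∈ M) : ∃ f ∈ L, f.1 = e.1 := by
  by_contra hnc
  push_neg at hnc
  obtain ⟨⟨hME, hMd⟩, hMstab⟩ := hM
  obtain ⟨⟨hLE, hLd⟩, hLstab⟩ := hL
  have heL : e ∉ L := fun h => hnc e h rfl
  -- state of alternating path construction
  let S := {p : (I × J) × (I × J) // p.1 ∈ M ∧ p.2 ∈ L ∧ p.2 ∉ M ∧
      p.1.2 = p.2.2 ∧ G.pJ p.1.2 p.2 p.1}
  -- initial state
  have hinit : ∃ f ∈ L, f.2 = e.2 ∧ ¬ G.pJ e.2 e f := by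
    have hB := hLstab e
    rw [Blocks] at hB
    push_neg at hB
    exact hB (hME he) heL (fun f hf hf1 => absurd hf1 (hnc f hf))
  obtain ⟨f0, hf0L, hf02, hf0np⟩ := hinit
  have hf0e : f0 ≠ e := fun h => heL (h ▸ hf0L)
  have hf0M : f0 ∉ M := by
    intro h
    exact (hMd e he f0 h (Ne.symm hf0e)).2 hf02.symm
  have hf0pJ : G.pJ e.2 f0 e := by
    rcases G.pJ_total e.2 e f0 (hME he) (hLE hf0L) rfl hf02 (Ne.symm hf0e) with h | h
    · exact absurd h hf0np
    · exact h
  let s0 : S := ⟨(e, f0), he, hf0L, hf0M, hf02.symm, hf0pJ⟩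
  -- the step
  have step_ex : ∀ s : S, ∃ t : S, t.val.1.1 = s.val.2.1 := by
    rintro ⟨⟨e1, f1⟩, he1M, hf1L, hf1M, hw, hpj⟩
    -- f1 does not block M, the pJ side holds, so the pI side fails
    have hBf := hMstab f1
    rw [Blocks] at hBf
    have hpjside : ∀ g ∈ M, g.2 = f1.2 → G.pJ f1.2 f1 g := by
      intro g hg hg2
      have : g = e1 := by
        by_contra hne
        exact (hMd g hg e1 he1M hne).2 (hg2.trans hw.symm)
      subst this
      rw [← hw]
      exact hpj
    have hnA : ¬ (∀ g ∈ M, g.1 = f1.1 → G.pI f1.1 f1 g) :=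
      fun hA => hBf ⟨hLE hf1L, hf1M, hA, hpjside⟩
    push_neg at hnA
    obtain ⟨g, hgM, hg1, hgnp⟩ := hnA
    -- e2 := g is the M-edge at m1 = f1.1
    have hgf1 : g ≠ f1 := fun h => hf1M (h ▸ hgM)
    have hgL : g ∉ L := by
      intro h
      exact (hLd g h f1 hf1L hgf1).1 hg1
    have hpig : G.pI f1.1 g f1 := by
      rcases G.pI_total f1.1 g f1 (hME hgM) (hLE hf1L) hg1 rfl hgf1 with h | h
      · exact h
      · exact absurd h hgnp
    -- g does not block L; the pI side holds, so the pJ side fails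
    have hBg := hLstab g
    rw [Blocks] at hBg
    have hpiside : ∀ k ∈ L, k.1 = g.1 → G.pI g.1 g k := by
      intro k hk hk1
      have : k = f1 := by
        by_contra hne
        exact (hLd k hk f1 hf1L hne).1 (hk1.trans hg1)
      subst this
      rw [hg1]
      exact hpig
    have hnB : ¬ (∀ k ∈ L, k.2 = g.2 → G.pJ g.2 g k) :=
      fun hBside => hBg ⟨hME hgM, hgL, hpiside, hBside⟩
    push_neg at hnB
    obtain ⟨k, hkL, hk2, hknp⟩ := hnB
    have hkg : k ≠ g := fun h => hgL (h ▸ hkL)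
    have hkM : k ∉ M := by
      intro h
      exact (hMd g hgM k h (Ne.symm hkg)).2 hk2.symm
    have hkpJ : G.pJ g.2 k g := by
      rcases G.pJ_total g.2 g k (hME hgM) (hLE hkL) rfl hk2 (Ne.symm hkg) with h | h
      · exact absurd h hknp
      · exact h
    exact ⟨⟨(g, k), hgM, hkL, hkM, hk2.symm, hkpJ⟩, hg1⟩
  choose step hstep using step_ex
  -- step is injective
  have hstepinj : Function.Injective step := by
    rintro ⟨⟨e1, f1⟩, he1M, hf1L, hf1M, hw1, hpj1⟩ ⟨⟨e2, f2⟩, he2M, hf2L, hf2M, hw2, hpj2⟩ h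
    have h1 := hstep ⟨(e1, f1), he1M, hf1L, hf1M, hw1, hpj1⟩
    have h2 := hstep ⟨(e2, f2), he2M, hf2L, hf2M, hw2, hpj2⟩
    rw [h] at h1
    have hff : f1 = f2 := by
      by_contra hne
      exact (hLd f1 hf1L f2 hf2L hne).1 (h1.symm.trans h2)
    have hee : e1 = e2 := by
      by_contra hne
      exact (hMd e1 he1M e2 he2M hne).2 (hw1.trans (hff ▸ hw2.symm))
    simp [hff, hee]
  -- s0 is not in the range of step
  have hs0 : ∀ s, step s ≠ s0 := by
    intro s hcontra
    have := hstep s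
    rw [hcontra] at this
    exact hnc s.val.2 s.2.2.1 this.symm
  have : Function.Injective (fun n => step^[n] s0) := iter_inj_aux hstepinj hs0
  have : Finite S := Subtype.finite
  obtain ⟨a, b, hab, heq⟩ := Finite.exists_ne_map_eq_of_infinite (fun n => step^[n] s0)
  exact hab (‹Function.Injective (fun n => step^[n] s0)› heq)

/-- The flipped system. -/
def PrefSystem.flip (G : PrefSystem I J) : PrefSystem J I where
  E := G.E.map (Equiv.prodComm I J).toEmbedding
  pI := fun w e f => G.pJ w e.swap f.swap
  pJ := fun m e f => G.pI m e.swap f.swap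
  pI_irrefl := fun w e => G.pJ_irrefl w e.swap
  pI_trans := fun w e f g h1 h2 => G.pJ_trans w e.swap f.swap g.swap h1 h2
  pI_total := fun w e f he hf h1 h2 hne => by
    refine G.pJ_total w e.swap f.swap ?_ ?_ h1 h2 (fun h => hne (Prod.swap_injective h))
    · simpa [Finset.mem_map_equiv] using he
    · simpa [Finset.mem_map_equiv] using hf
  pJ_irrefl := fun m e => G.pI_irrefl m e.swap
  pJ_trans := fun m e f g h1 h2 => G.pI_trans m e.swap f.swap g.swap h1 h2
  pJ_total := fun m e f he hf h1 h2 hne => by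
    refine G.pI_total m e.swap f.swap ?_ ?_ h1 h2 (fun h => hne (Prod.swap_injective h))
    · simpa [Finset.mem_map_equiv] using he
    · simpa [Finset.mem_map_equiv] using hf

lemma mem_flip_E {G : PrefSystem I J} {e : J × I} :
    e ∈ (PrefSystem.flip G).E ↔ e.swap ∈ G.E := by
  simp [PrefSystem.flip, Finset.mem_map_equiv]

lemma mem_map_swap {M : Finset (I × J)} {e : J × I} :
    e ∈ M.map (Equiv.prodComm I J).toEmbedding ↔ e.swap ∈ M := by
  simp [Finset.mem_map_equiv]

lemma isStable_flip {G : PrefSystem I J} {M : Finset (I × J)} (hM : IsStable G M) :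
    IsStable (PrefSystem.flip G) (M.map (Equiv.prodComm I J).toEmbedding) := by
  obtain ⟨⟨hME, hMd⟩, hstab⟩ := hM
  refine ⟨⟨?_, ?_⟩, ?_⟩
  · intro x hx
    rw [mem_map_swap] at hx
    rw [mem_flip_E]
    exact hME hx
  · intro x hx y hy hne
    rw [mem_map_swap] at hx hy
    have := hMd x.swap hx y.swap hy (fun h => hne (Prod.swap_injective h))
    exact ⟨this.2, this.1⟩
  · rintro e ⟨heE, heM, hA, hB⟩
    rw [mem_flip_E] at heE
    rw [mem_map_swap] at heM
    refine hstab e.swap ⟨heE, heM, ?_, ?_⟩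
    · intro f hf hf1
      have := hB (f.swap) (mem_map_swap.2 (by simpa using hf)) hf1
      simpa [PrefSystem.flip] using this
    · intro f hf hf2
      have := hA (f.swap) (mem_map_swap.2 (by simpa using hf)) hf2
      simpa [PrefSystem.flip] using this

lemma covered_of_covered' [Finite I] [Finite J] {G : PrefSystem I J}
    {M L : Finset (I × J)} (hM : IsStable G M) (hL : IsStable G L)
    {e : I × J} (he : e ∈ M) : ∃ f ∈ L, f.2 = e.2 := by
  obtain ⟨f, hf, hf1⟩ := covered_of_covered (isStable_flip hM) (isStable_flip hL)
    (e := e.swap) (mem_map_swap.2 (by simpa using he))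
  rw [mem_map_swap] at hf
  exact ⟨f.swap, hf, hf1⟩

lemma deg2I [Finite I] [Finite J] [DecidableEq I] [DecidableEq J]
    {G : PrefSystem I J} {M L : Finset (I × J)} (hM : IsStable G M) (hL : IsStable G L)
    {e : I × J} (he : e ∈ M) (heL : e ∉ L) :
    ((symmDiff M L).filter (fun g => g.1 = e.1)).card = 2 := by
  obtain ⟨f, hfL, hf1⟩ := covered_of_covered hM hL he
  have hef : e ≠ f := fun h => heL (h ▸ hfL)
  have hfM : f ∉ M := fun h => (hM.1.2 e he f h hef).1 hf1.symm
  have hset : (symmDiff M L).filter (fun g => g.1 = e.1) = {e, f} := by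
    ext g
    simp only [Finset.mem_filter, Finset.mem_symmDiff, Finset.mem_insert,
      Finset.mem_singleton]
    constructor
    · rintro ⟨⟨hgM, _⟩ | ⟨hgL, _⟩, hg1⟩
      · left
        by_contra hne
        exact (hM.1.2 g hgM e he hne).1 hg1
      · right
        by_contra hne
        exact (hL.1.2 g hgL f hfL hne).1 (hg1.trans hf1.symm)
    · rintro (rfl | rfl)
      · exact ⟨Or.inl ⟨he, heL⟩, rfl⟩
      · exact ⟨Or.inr ⟨hfL, hfM⟩, hf1⟩
  rw [hset, Finset.card_insert_of_notMem (by simpa using hef), Finset.card_singleton]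

lemma deg2J [Finite I] [Finite J] [DecidableEq I] [DecidableEq J]
    {G : PrefSystem I J} {M L : Finset (I × J)} (hM : IsStable G M) (hL : IsStable G L)
    {e : I × J} (he : e ∈ M) (heL : e ∉ L) :
    ((symmDiff M L).filter (fun g => g.2 = e.2)).card = 2 := by
  obtain ⟨f, hfL, hf2⟩ := covered_of_covered' hM hL he
  have hef : e ≠ f := fun h => heL (h ▸ hfL)
  have hfM : f ∉ M := fun h => (hM.1.2 e he f h hef).2 hf2.symm
  have hset : (symmDiff M L).filter (fun g => g.2 = e.2) = {e, f} := by
    ext g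
    simp only [Finset.mem_filter, Finset.mem_symmDiff, Finset.mem_insert,
      Finset.mem_singleton]
    constructor
    · rintro ⟨⟨hgM, _⟩ | ⟨hgL, _⟩, hg2⟩
      · left
        by_contra hne
        exact (hM.1.2 g hgM e he hne).2 hg2
      · right
        by_contra hne
        exact (hL.1.2 g hgL f hfL hne).2 (hg2.trans hf2.symm)
    · rintro (rfl | rfl)
      · exact ⟨Or.inl ⟨he, heL⟩, rfl⟩
      · exact ⟨Or.inr ⟨hfL, hfM⟩, hf2⟩
  rw [hset, Finset.card_insert_of_notMem (by simpa using hef), Finset.card_singleton]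

/-- the symmetric difference of two stable matchings is a disjoint
union of cycles: every vertex covered by `M △ L` has degree exactly 2 in it. -/
theorem symmDiff_degree_two {I J : Type} [Fintype I] [Fintype J]
    [DecidableEq I] [DecidableEq J] (G : PrefSystem I J)
    (M L : Finset (I × J)) (hM : IsStable G M) (hL : IsStable G L) :
    (∀ m : I, (∃ e ∈ symmDiff M L, e.1 = m) →
      ((symmDiff M L).filter (fun e => e.1 = m)).card = 2) ∧
    (∀ w : J, (∃ e ∈ symmDiff M L, e.2 = w) →
      ((symmDiff M L).filter (fun e => e.2 = w)).card = 2) := by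
  constructor
  · rintro m ⟨e, heSD, rfl⟩
    rcases Finset.mem_symmDiff.1 heSD with ⟨heM, heL⟩ | ⟨heL, heM⟩
    · exact deg2I hM hL heM heL
    · rw [symmDiff_comm]
      exact deg2I hL hM heL heM
  · rintro w ⟨e, heSD, rfl⟩
    rcases Finset.mem_symmDiff.1 heSD with ⟨heM, heL⟩ | ⟨heL, heM⟩
    · exact deg2J hM hL heM heL
    · rw [symmDiff_comm]
      exact deg2J hL hM heL heM
end

section
/- Let M and L be stable matchings of a bipartite graph with bipartition (I, J). Define M ∨ L as the set of edges obtained by choosing, at every vertex m ∈ I covered by the matchings, the edge among {M-edge at m, L-edge at m} that is less preferred by m (the larger one in <_m), together with all common edges of M and L. Then M ∨ L is a stable matching. -/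
variable {I J : Type}

/-!
At each man the join keeps the worse of his two partners, so no two of its edges share a man, and
a man on a blocking edge prefers that edge to his partner in `M` or to his partner in `L` (or has
no partner there). At a woman the join keeps an edge she likes at least as much as her `M`-partner
`h`: if `h` is dropped, `h` does not block `L`, so she prefers her `L`-partner `k`, and `k` can
only fail to block `M` because its man prefers his `M`-partner, so `k` is kept. Hence a blocking
edge of the join would block `M` or `L`.

Two kept edges at one woman are excluded by the opposition of interests: if the man of an `M`-edge
`e` prefers his `L`-partner, then the woman of `e` prefers `e` to her `L`-partner. Passing from
such an edge `e` to the `L`-partner of its man and then to the `M`-partner of her woman gives an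
injective self-map of the finite set of these edges; it is therefore onto, and a preimage of `e`
provides the `L`-partner of its woman.
-/

theorem Finset.forall_exists_rel_of_leftUnique {α : Type*} {s : Finset α} {R : α → α → Prop}
    (htotal : ∀ a ∈ s, ∃ b ∈ s, R a b)
    (hunique : ∀ a₁ ∈ s, ∀ a₂ ∈ s, ∀ b, R a₁ b → R a₂ b → a₁ = a₂) :
    ∀ b ∈ s, ∃ a ∈ s, R a b := by
  choose f hfs hfR using htotal
  intro b hb
  obtain ⟨a, ha, rfl⟩ := Finset.surj_on_of_inj_on_of_card_le f hfs
    (fun a₁ a₂ ha₁ ha₂ h => hunique a₁ ha₁ a₂ ha₂ _ (hfR a₁ ha₁) (h ▸ hfR a₂ ha₂)) le_rfl b hb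
  exact ⟨a, ha, hfR a ha⟩

namespace PrefSystem

variable (G : PrefSystem I J)

theorem pI_asymm {m : I} {e f : I × J} (h : G.pI m e f) : ¬ G.pI m f e :=
  fun h' => G.pI_irrefl m e (G.pI_trans m e f e h h')

theorem pJ_asymm {w : J} {e f : I × J} (h : G.pJ w e f) : ¬ G.pJ w f e :=
  fun h' => G.pJ_irrefl w e (G.pJ_trans w e f e h h')

end PrefSystem

variable {G : PrefSystem I J} {A B M L N : Finset (I × J)} {e f : I × J}

theorem IsMatching.eq_of_fst_eq (hA : IsMatching G A) (he : e ∈ A) (hf : f ∈ A)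
    (h : e.1 = f.1) : e = f :=
  by_contra fun hne => (hA.2 e he f hf hne).1 h

theorem IsMatching.eq_of_snd_eq (hA : IsMatching G A) (he : e ∈ A) (hf : f ∈ A)
    (h : e.2 = f.2) : e = f :=
  by_contra fun hne => (hA.2 e he f hf hne).2 h

theorem IsStable.exists_pJ_of_forall_pI (hA : IsStable G A) (heE : e ∈ G.E) (heA : e ∉ A)
    (hman : ∀ f ∈ A, f.1 = e.1 → G.pI e.1 e f) :
    ∃ h ∈ A, h.2 = e.2 ∧ G.pJ e.2 h e := by
  by_contra! hwoman
  refine hA.2 e ⟨heE, heA, hman, fun f hfA hf2 => ?_⟩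
  have hfe : f ≠ e := fun h => heA (h ▸ hfA)
  exact (G.pJ_total e.2 e f heE (hA.1.1 hfA) rfl hf2 hfe.symm).resolve_right
    (hwoman f hfA hf2)

theorem IsStable.exists_pI_of_forall_pJ (hA : IsStable G A) (heE : e ∈ G.E) (heA : e ∉ A)
    (hwoman : ∀ f ∈ A, f.2 = e.2 → G.pJ e.2 e f) :
    ∃ g ∈ A, g.1 = e.1 ∧ G.pI e.1 g e := by
  by_contra! hman
  refine hA.2 e ⟨heE, heA, fun f hfA hf1 => ?_, hwoman⟩
  have hfe : f ≠ e := fun h => heA (h ▸ hfA)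
  exact (G.pI_total e.1 e f heE (hA.1.1 hfA) rfl hf1 hfe.symm).resolve_right
    (hman f hfA hf1)

def ImprovedAtI (G : PrefSystem I J) (B : Finset (I × J)) (e : I × J) : Prop :=
  ∃ f ∈ B, f.1 = e.1 ∧ G.pI e.1 f e

theorem IsStable.exists_improvedAtI_of_improvedAtI (hA : IsStable G A) (hB : IsStable G B)
    (he : e ∈ A) (himp : ImprovedAtI G B e) :
    ∃ e' ∈ A, ImprovedAtI G B e' ∧ ∃ g ∈ B, g.1 = e.1 ∧ g.2 = e'.2 ∧ G.pJ e'.2 e' g := by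
  obtain ⟨g, hgB, hg1, hge⟩ := himp
  have hgA : g ∉ A := fun hgA =>
    G.pI_irrefl _ _ (hA.1.eq_of_fst_eq hgA he hg1 ▸ hge)
  obtain ⟨e', he'A, he'2, he'g⟩ := hA.exists_pJ_of_forall_pI (hB.1.1 hgB) hgA
    fun f hfA hf1 => hg1 ▸ hA.1.eq_of_fst_eq hfA he (hf1.trans hg1) ▸ hge
  have he'B : e' ∉ B := fun he'B =>
    G.pJ_irrefl _ _ (hB.1.eq_of_snd_eq he'B hgB he'2 ▸ he'g)
  have himp' : ImprovedAtI G B e' := hB.exists_pI_of_forall_pJ (hA.1.1 he'A) he'B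
    fun f hfB hf2 => he'2 ▸ hB.1.eq_of_snd_eq hfB hgB (hf2.trans he'2) ▸ he'g
  exact ⟨e', he'A, himp', g, hgB, hg1, he'2.symm, he'2 ▸ he'g⟩

theorem IsStable.exists_pJ_of_improvedAtI (hA : IsStable G A) (hB : IsStable G B) (he : e ∈ A)
    (himp : ImprovedAtI G B e) : ∃ g ∈ B, g.2 = e.2 ∧ G.pJ e.2 e g := by
  classical
  refine (Finset.forall_exists_rel_of_leftUnique (s := A.filter (ImprovedAtI G B))
    (R := fun a b => ∃ g ∈ B, g.1 = a.1 ∧ g.2 = b.2 ∧ G.pJ b.2 b g) ?_ ?_ e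
    (Finset.mem_filter.2 ⟨he, himp⟩)).elim fun _ ⟨_, g, hgB, _, hg2, hge⟩ => ⟨g, hgB, hg2, hge⟩
  · intro a ha
    rw [Finset.mem_filter] at ha
    obtain ⟨b, hbA, hb, hab⟩ := hA.exists_improvedAtI_of_improvedAtI hB ha.1 ha.2
    exact ⟨b, Finset.mem_filter.2 ⟨hbA, hb⟩, hab⟩
  · rintro a₁ ha₁ a₂ ha₂ b ⟨g₁, hg₁B, hg₁1, hg₁2, -⟩ ⟨g₂, hg₂B, hg₂1, hg₂2, -⟩
    have hg : g₁ = g₂ := hB.1.eq_of_snd_eq hg₁B hg₂B (hg₁2.trans hg₂2.symm)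
    exact hA.1.eq_of_fst_eq (Finset.mem_filter.1 ha₁).1 (Finset.mem_filter.1 ha₂).1
      (hg₁1.symm.trans (hg ▸ hg₂1))

def IsJoin (G : PrefSystem I J) (M L N : Finset (I × J)) : Prop :=
  ∀ e, e ∈ N ↔ (e ∈ M ∧ e ∈ L) ∨ (e ∈ M ∧ ImprovedAtI G L e) ∨ (e ∈ L ∧ ImprovedAtI G M e)

namespace IsJoin

theorem symm (hN : IsJoin G M L N) : IsJoin G L M N := fun e => by
  rw [hN e, and_comm (a := e ∈ M), or_comm (a := e ∈ M ∧ _)]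

theorem mem_or_mem (hN : IsJoin G M L N) (he : e ∈ N) : e ∈ M ∨ e ∈ L := by
  rcases (hN e).1 he with ⟨h, -⟩ | ⟨h, -⟩ | ⟨h, -⟩
  exacts [.inl h, .inl h, .inr h]

theorem subset (hN : IsJoin G M L N) (hM : IsMatching G M) (hL : IsMatching G L) :
    N ⊆ G.E := fun _ he => (hN.mem_or_mem he).elim (fun h => hM.1 h) (fun h => hL.1 h)

theorem eq_of_rel {r : I × J → I × J → Prop} (hN : IsJoin G M L N) (hr : ∀ a b, r a b → r b a)
    (hM : ∀ e ∈ M, ∀ f ∈ M, r e f → e = f) (hL : ∀ e ∈ L, ∀ f ∈ L, r e f → e = f)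
    (hML : ∀ e ∈ M, ∀ f ∈ L, ImprovedAtI G L e → ImprovedAtI G M f → ¬ r e f)
    (he : e ∈ N) (hf : f ∈ N) (hef : r e f) : e = f := by
  rcases (hN e).1 he with ⟨heM, heL⟩ | ⟨heM, heimp⟩ | ⟨heL, heimp⟩ <;>
  rcases (hN f).1 hf with ⟨hfM, hfL⟩ | ⟨hfM, hfimp⟩ | ⟨hfL, hfimp⟩
  all_goals first
    | exact hM e ‹_› f ‹_› hef
    | exact hL e ‹_› f ‹_› hef
    | exact (hML e heM f hfL heimp hfimp hef).elim
    | exact (hML f hfM e heL hfimp heimp (hr e f hef)).elim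

theorem eq_of_fst_eq (hN : IsJoin G M L N) (hM : IsMatching G M) (hL : IsMatching G L)
    (he : e ∈ N) (hf : f ∈ N) (h : e.1 = f.1) : e = f := by
  refine hN.eq_of_rel (r := fun e f => e.1 = f.1) (fun _ _ => Eq.symm)
    (fun _ he _ hf => hM.eq_of_fst_eq he hf) (fun _ he _ hf => hL.eq_of_fst_eq he hf)
    ?_ he hf h
  rintro e heM f hfL ⟨g, hgL, hg1, hge⟩ ⟨g', hg'M, hg'1, hg'f⟩ hef
  rw [hL.eq_of_fst_eq hgL hfL (hg1.trans hef)] at hge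
  rw [hM.eq_of_fst_eq hg'M heM (hg'1.trans hef.symm), ← hef] at hg'f
  exact G.pI_asymm hge hg'f

theorem eq_of_snd_eq (hN : IsJoin G M L N) (hM : IsStable G M) (hL : IsStable G L)
    (he : e ∈ N) (hf : f ∈ N) (h : e.2 = f.2) : e = f := by
  refine hN.eq_of_rel (r := fun e f => e.2 = f.2) (fun _ _ => Eq.symm)
    (fun _ he _ hf => hM.1.eq_of_snd_eq he hf) (fun _ he _ hf => hL.1.eq_of_snd_eq he hf)
    ?_ he hf h
  intro e heM f hfL heimp hfimp hef
  obtain ⟨g, hgL, hg2, heg⟩ := hM.exists_pJ_of_improvedAtI hL heM heimp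
  obtain ⟨g', hg'M, hg'2, hfg'⟩ := hL.exists_pJ_of_improvedAtI hM hfL hfimp
  rw [hL.1.eq_of_snd_eq hgL hfL (hg2.trans hef)] at heg
  rw [hM.1.eq_of_snd_eq hg'M heM (hg'2.trans hef.symm), ← hef] at hfg'
  exact G.pJ_asymm heg hfg'

theorem isMatching (hN : IsJoin G M L N) (hM : IsStable G M) (hL : IsStable G L) :
    IsMatching G N :=
  ⟨hN.subset hM.1 hL.1, fun _ he _ hf hne =>
    ⟨fun h => hne (hN.eq_of_fst_eq hM.1 hL.1 he hf h),
      fun h => hne (hN.eq_of_snd_eq hM hL he hf h)⟩⟩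

theorem exists_mem_fst_eq (hN : IsJoin G M L N) (hM : IsMatching G M) (hL : IsMatching G L)
    (heM : e ∈ M) (hfL : f ∈ L) (h : e.1 = f.1) : ∃ g ∈ N, g.1 = e.1 := by
  by_cases hef : e = f
  · exact ⟨e, (hN e).2 (.inl ⟨heM, hef ▸ hfL⟩), rfl⟩
  rcases G.pI_total e.1 e f (hM.1 heM) (hL.1 hfL) rfl h.symm hef with hp | hp
  · exact ⟨f, (hN f).2 (.inr (.inr ⟨hfL, e, heM, h, h ▸ hp⟩)), h.symm⟩
  · exact ⟨e, (hN e).2 (.inr (.inl ⟨heM, f, hfL, h.symm, hp⟩)), rfl⟩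

theorem exists_mem_snd_eq_pJ (hN : IsJoin G M L N) (hM : IsStable G M) (hL : IsStable G L)
    (heM : e ∈ M) : ∃ f ∈ N, f.2 = e.2 ∧ (f = e ∨ G.pJ e.2 f e) := by
  by_cases heN : e ∈ N
  · exact ⟨e, heN, rfl, .inl rfl⟩
  have heL : e ∉ L := fun heL => heN ((hN e).2 (.inl ⟨heM, heL⟩))
  have hman : ∀ f ∈ L, f.1 = e.1 → G.pI e.1 e f := by
    intro f hfL hf1
    have hfe : f ≠ e := fun h => heL (h ▸ hfL)
    refine (G.pI_total e.1 e f (hM.1.1 heM) (hL.1.1 hfL) rfl hf1 hfe.symm).resolve_right ?_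
    exact fun hp => heN ((hN e).2 (.inr (.inl ⟨heM, f, hfL, hf1, hp⟩)))
  obtain ⟨k, hkL, hk2, hke⟩ := hL.exists_pJ_of_forall_pI (hM.1.1 heM) heL hman
  have hkM : k ∉ M := fun hkM => G.pJ_irrefl _ _ (hM.1.eq_of_snd_eq hkM heM hk2 ▸ hke)
  have hkimp : ImprovedAtI G M k := hM.exists_pI_of_forall_pJ (hL.1.1 hkL) hkM
    fun f hfM hf2 => hk2 ▸ hM.1.eq_of_snd_eq hfM heM (hf2.trans hk2) ▸ hke
  exact ⟨k, (hN k).2 (.inr (.inr ⟨hkL, hkimp⟩)), hk2, .inr hke⟩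

theorem forall_pI_of_blocks (hN : IsJoin G M L N) (hM : IsMatching G M) (hL : IsMatching G L)
    (hbl : Blocks G N e) :
    (∀ f ∈ M, f.1 = e.1 → G.pI e.1 e f) ∨ (∀ f ∈ L, f.1 = e.1 → G.pI e.1 e f) := by
  by_cases hcov : ∃ f ∈ N, f.1 = e.1
  · obtain ⟨f, hfN, hf1⟩ := hcov
    rcases hN.mem_or_mem hfN with hfM | hfL
    · exact .inl fun g hgM hg1 => hM.eq_of_fst_eq hgM hfM (hg1.trans hf1.symm) ▸ hbl.2.2.1 f hfN hf1
    · exact .inr fun g hgL hg1 => hL.eq_of_fst_eq hgL hfL (hg1.trans hf1.symm) ▸ hbl.2.2.1 f hfN hf1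
  by_cases hcovM : ∃ f ∈ M, f.1 = e.1
  · obtain ⟨f, hfM, hf1⟩ := hcovM
    refine .inr fun g hgL hg1 => (hcov ?_).elim
    obtain ⟨h, hhN, hh1⟩ := hN.exists_mem_fst_eq hM hL hfM hgL (hf1.trans hg1.symm)
    exact ⟨h, hhN, hh1.trans hf1⟩
  · exact .inl fun f hfM hf1 => (hcovM ⟨f, hfM, hf1⟩).elim

theorem not_blocks_of_forall_pI (hN : IsJoin G M L N) (hM : IsStable G M) (hL : IsStable G L)
    (hbl : Blocks G N e) (hman : ∀ f ∈ M, f.1 = e.1 → G.pI e.1 e f) : False := by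
  have heM : e ∉ M := fun heM => G.pI_irrefl _ _ (hman e heM rfl)
  obtain ⟨h, hhM, hh2, hhe⟩ := hM.exists_pJ_of_forall_pI hbl.1 heM hman
  obtain ⟨f, hfN, hf2, hfh⟩ := hN.exists_mem_snd_eq_pJ hM hL hhM
  have hef : G.pJ e.2 e f := hbl.2.2.2 f hfN (hf2.trans hh2)
  have heh : G.pJ e.2 e h := hfh.elim (· ▸ hef) fun hp => G.pJ_trans _ _ _ _ hef (hh2 ▸ hp)
  exact G.pJ_asymm heh hhe

end IsJoin

theorem join_is_stable_general {I J : Type} (G : PrefSystem I J)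
    (M L : Finset (I × J)) (hM : IsStable G M) (hL : IsStable G L)
    (N : Finset (I × J))
    (hN : ∀ e : I × J, e ∈ N ↔
      ((e ∈ M ∧ e ∈ L) ∨
       (e ∈ M ∧ ∃ f ∈ L, f.1 = e.1 ∧ G.pI e.1 f e) ∨
       (e ∈ L ∧ ∃ f ∈ M, f.1 = e.1 ∧ G.pI e.1 f e))) :
    IsStable G N := by
  have hJ : IsJoin G M L N := hN
  refine ⟨hJ.isMatching hM hL, fun e hbl => ?_⟩
  rcases hJ.forall_pI_of_blocks hM.1 hL.1 hbl with hman | hman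
  · exact hJ.not_blocks_of_forall_pI hM hL hbl hman
  · exact hJ.symm.not_blocks_of_forall_pI hL hM hbl hman

/-- the join `M ∨ L` of two stable matchings — consisting of all
common edges together with, at each covered vertex `m ∈ I`, the less preferred
of the `M`-edge and the `L`-edge at `m` — is again a stable matching.
Here `N` is characterized exactly as this edge set. -/
theorem join_is_stable {I J : Type} [Fintype I] [Fintype J]
    [DecidableEq I] [DecidableEq J] (G : PrefSystem I J)
    (M L : Finset (I × J)) (hM : IsStable G M) (hL : IsStable G L)
    (N : Finset (I × J))
    (hN : ∀ e : I × J, e ∈ N ↔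
      ((e ∈ M ∧ e ∈ L) ∨
       (e ∈ M ∧ ∃ f ∈ L, f.1 = e.1 ∧ G.pI e.1 f e) ∨
       (e ∈ L ∧ ∃ f ∈ M, f.1 = e.1 ∧ G.pI e.1 f e))) :
    IsStable G N :=
  join_is_stable_general G M L hM hL N hN
end

section
/- Let M and L be stable matchings of a bipartite graph with bipartition (I, J). Define M ∧ L by choosing at every covered vertex m ∈ I the more preferred of the edges {M-edge at m, L-edge at m}. Then M ∧ L is a matching; moreover, the operations ∧ and ∨ (choosing the more preferred, respectively less preferred, edge at each covered vertex of I) make the set of stable matchings of G into a distributive lattice. -/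
variable {I J : Type}

/-- `M ≼ L`: every covered vertex in `I` weakly prefers its `M`-edge to its `L`-edge. -/
def Preceq (G : PrefSystem I J) (M L : Finset (I × J)) : Prop :=
  ∀ e ∈ M, ∀ f ∈ L, e.1 = f.1 → e = f ∨ G.pI e.1 e f

/-- Meet condition: at each covered `m ∈ I` choose the more preferred of the
`M`-edge and the `L`-edge (common edges included). -/
def MeetCond (G : PrefSystem I J) (M L : Finset (I × J)) (e : I × J) : Prop :=
  (e ∈ M ∧ e ∈ L) ∨
  (e ∈ M ∧ ∃ f ∈ L, f.1 = e.1 ∧ G.pI e.1 e f) ∨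
  (e ∈ L ∧ ∃ f ∈ M, f.1 = e.1 ∧ G.pI e.1 e f)

/-- Join condition: at each covered `m ∈ I` choose the less preferred of the
`M`-edge and the `L`-edge (common edges included). -/
def JoinCond (G : PrefSystem I J) (M L : Finset (I × J)) (e : I × J) : Prop :=
  (e ∈ M ∧ e ∈ L) ∨
  (e ∈ M ∧ ∃ f ∈ L, f.1 = e.1 ∧ G.pI e.1 f e) ∨
  (e ∈ L ∧ ∃ f ∈ M, f.1 = e.1 ∧ G.pI e.1 f e)

namespace StableLattice

variable {I J : Type} (G : PrefSystem I J)

/-- weak preference at vertex `m` -/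
def WP (m : I) (e f : I × J) : Prop := e = f ∨ G.pI m e f

lemma WP_trans {m : I} {e f g : I × J} (h1 : WP G m e f) (h2 : WP G m f g) : WP G m e g := by
  rcases h1 with rfl | h1
  · exact h2
  · rcases h2 with rfl | h2
    · exact Or.inr h1
    · exact Or.inr (G.pI_trans _ _ _ _ h1 h2)

lemma pI_asymm {m : I} {e f : I × J} (h1 : G.pI m e f) (h2 : G.pI m f e) : False :=
  G.pI_irrefl m e (G.pI_trans _ _ _ _ h1 h2)

lemma pJ_asymm {w : J} {e f : I × J} (h1 : G.pJ w e f) (h2 : G.pJ w f e) : False :=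
  G.pJ_irrefl w e (G.pJ_trans _ _ _ _ h1 h2)

lemma uniq1 {M : Finset (I × J)} (hM : IsMatching G M) {e f : I × J}
    (he : e ∈ M) (hf : f ∈ M) (h : e.1 = f.1) : e = f := by
  by_contra hne
  exact (hM.2 e he f hf hne).1 h

lemma uniq2 {M : Finset (I × J)} (hM : IsMatching G M) {e f : I × J}
    (he : e ∈ M) (hf : f ∈ M) (h : e.2 = f.2) : e = f := by
  by_contra hne
  exact (hM.2 e he f hf hne).2 h

lemma exists_pref_J {L : Finset (I × J)} (hL : IsStable G L) {e : I × J}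
    (heE : e ∈ G.E) (heL : e ∉ L)
    (hI : ∀ f ∈ L, f.1 = e.1 → G.pI e.1 e f) :
    ∃ f ∈ L, f.2 = e.2 ∧ G.pJ e.2 f e := by
  have hnb := hL.2 e
  unfold Blocks at hnb
  push_neg at hnb
  obtain ⟨f, hfL, hf2, hnp⟩ := hnb heE heL hI
  refine ⟨f, hfL, hf2, ?_⟩
  have hne : f ≠ e := fun h => heL (h ▸ hfL)
  rcases G.pJ_total e.2 e f heE (hL.1.1 hfL) rfl hf2 hne.symm with h | h
  · exact absurd h hnp
  · exact h

lemma exists_pref_I {L : Finset (I × J)} (hL : IsStable G L) {e : I × J}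
    (heE : e ∈ G.E) (heL : e ∉ L)
    (hJ : ∀ f ∈ L, f.2 = e.2 → G.pJ e.2 e f) :
    ∃ f ∈ L, f.1 = e.1 ∧ G.pI e.1 f e := by
  have hnb := hL.2 e
  unfold Blocks at hnb
  push_neg at hnb
  by_cases hIc : ∀ f ∈ L, f.1 = e.1 → G.pI e.1 e f
  · obtain ⟨f, hfL, hf2, hnp⟩ := hnb heE heL hIc
    exact absurd (hJ f hfL hf2) hnp
  · push_neg at hIc
    obtain ⟨f, hfL, hf1, hnp⟩ := hIc
    refine ⟨f, hfL, hf1, ?_⟩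
    have hne : f ≠ e := fun h => heL (h ▸ hfL)
    rcases G.pI_total e.1 e f heE (hL.1.1 hfL) rfl hf1 hne.symm with h | h
    · exact absurd h hnp
    · exact h

/-- chain invariant -/
def QP (M L : Finset (I × J)) (p : (I × J) × (I × J)) : Prop :=
  p.1 ∈ M ∧ p.2 ∈ L ∧ p.2.2 = p.1.2 ∧ G.pJ p.1.2 p.2 p.1

lemma step_ex {M L : Finset (I × J)} (hM : IsStable G M) (hL : IsStable G L)
    (p : (I × J) × (I × J)) (hp : QP G M L p) :
    ∃ q, QP G M L q ∧ q.1.1 = p.2.1 := by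
  obtain ⟨he, hf, hw, hpj⟩ := hp
  have hfM : p.2 ∉ M := by
    intro hfM
    have h2 : p.2 = p.1 := uniq2 G hM.1 hfM he hw
    rw [h2] at hpj
    exact G.pJ_irrefl _ _ hpj
  have hJ : ∀ g ∈ M, g.2 = p.2.2 → G.pJ p.2.2 p.2 g := by
    intro g hg h2
    have : g = p.1 := uniq2 G hM.1 hg he (h2.trans hw)
    rw [this, hw]
    exact hpj
  obtain ⟨h, hhM, hh1, hpi⟩ := exists_pref_I G hM (hL.1.1 hf) hfM hJ
  have hhL : h ∉ L := by
    intro hhL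
    have : h = p.2 := uniq1 G hL.1 hhL hf hh1
    rw [this] at hpi
    exact G.pI_irrefl _ _ hpi
  have hI : ∀ g ∈ L, g.1 = h.1 → G.pI h.1 h g := by
    intro g hg h1
    have : g = p.2 := uniq1 G hL.1 hg hf (h1.trans hh1)
    rw [this, hh1]
    exact hpi
  obtain ⟨g, hgL, hg2, hpj'⟩ := exists_pref_J G hL (hM.1.1 hhM) hhL hI
  exact ⟨(h, g), ⟨hhM, hgL, hg2, hpj'⟩, hh1⟩

lemma chain_false {M L : Finset (I × J)} [Fintype I] [Fintype J]
    (hM : IsStable G M) (hL : IsStable G L)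
    (s0 : (I × J) × (I × J)) (h0 : QP G M L s0)
    (hstart : ∀ p, QP G M L p → p.2.1 = s0.1.1 → False) : False := by
  classical
  haveI : Finite {p : (I × J) × (I × J) // QP G M L p} := Subtype.finite
  let step : {p // QP G M L p} → {p // QP G M L p} :=
    fun p => ⟨(step_ex G hM hL p.1 p.2).choose, (step_ex G hM hL p.1 p.2).choose_spec.1⟩
  have hstep1 : ∀ p, (step p).1.1.1 = p.1.2.1 :=
    fun p => (step_ex G hM hL p.1 p.2).choose_spec.2
  have hinj : Function.Injective step := by
    intro p q h
    have h1 : p.1.2.1 = q.1.2.1 := by rw [← hstep1 p, ← hstep1 q, h]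
    have h2 : p.1.2 = q.1.2 := uniq1 G hL.1 p.2.2.1 q.2.2.1 h1
    have h3 : p.1.1 = q.1.1 :=
      uniq2 G hM.1 p.2.1 q.2.1 (by rw [← p.2.2.2.1, ← q.2.2.2.1, h2])
    exact Subtype.ext (Prod.ext h3 h2)
  have hkey : ∀ i j, step^[i] ⟨s0, h0⟩ = step^[j] ⟨s0, h0⟩ → i = j := by
    intro i
    induction i with
    | zero =>
      intro j h
      cases j with
      | zero => rfl
      | succ k =>
        exfalso
        rw [Function.iterate_succ_apply'] at h
        set q := step^[k] ⟨s0, h0⟩ with hq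
        have : s0.1.1 = q.1.2.1 := by
          rw [← hstep1 q, ← h, Function.iterate_zero_apply]
        exact hstart q.1 q.2 this.symm
    | succ k ih =>
      intro j h
      cases j with
      | zero =>
        exfalso
        rw [Function.iterate_succ_apply'] at h
        set q := step^[k] ⟨s0, h0⟩ with hq
        have : s0.1.1 = q.1.2.1 := by rw [← hstep1 q, h, Function.iterate_zero_apply]
        exact hstart q.1 q.2 this.symm
      | succ l =>
        rw [Function.iterate_succ_apply', Function.iterate_succ_apply'] at h
        exact congrArg Nat.succ (ih l (hinj h))
  obtain ⟨i, j, hne, heq⟩ :=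
    Finite.exists_ne_map_eq_of_infinite (fun n => step^[n] (⟨s0, h0⟩ : {p // QP G M L p}))
  exact hne (hkey i j heq)

end StableLattice
namespace StableLattice
set_option linter.unusedSectionVars false
set_option linter.unusedVariables false

variable {I J : Type} [Fintype I] [Fintype J] (G : PrefSystem I J)

lemma cover_I {M L : Finset (I × J)} (hM : IsStable G M) (hL : IsStable G L) :
    ∀ e ∈ M, ∃ f ∈ L, f.1 = e.1 := by
  intro e heM
  by_contra hc
  push_neg at hc
  have heL : e ∉ L := fun h => hc e h rfl
  obtain ⟨f, hfL, hf2, hpj⟩ := exists_pref_J G hL (hM.1.1 heM) heL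
    (fun f hf h1 => absurd h1 (hc f hf))
  exact chain_false G hM hL (e, f) ⟨heM, hfL, hf2, hpj⟩
    (fun p hp h => hc p.2 hp.2.1 h)

lemma cover_J {M L : Finset (I × J)} (hM : IsStable G M) (hL : IsStable G L) :
    ∀ e ∈ M, ∃ f ∈ L, f.2 = e.2 := by
  intro e heM
  by_contra hc
  push_neg at hc
  have heL : e ∉ L := fun h => hc e h rfl
  obtain ⟨f, hfL, hf1⟩ := cover_I G hM hL e heM
  have hfe : f ≠ e := fun h => heL (h ▸ hfL)
  have hnef : ¬ G.pI e.1 e f := by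
    intro hp
    refine hL.2 e ⟨hM.1.1 heM, heL, ?_, ?_⟩
    · intro g hg h1
      have : g = f := uniq1 G hL.1 hg hfL (h1.trans hf1.symm)
      rw [this]; exact hp
    · intro g hg h2
      exact absurd h2 (hc g hg)
  have hpf : G.pI e.1 f e :=
    (G.pI_total e.1 e f (hM.1.1 heM) (hL.1.1 hfL) rfl hf1 hfe.symm).resolve_left hnef
  have hfM : f ∉ M := fun h => hfe (uniq1 G hM.1 h heM hf1)
  have hJcond : ∀ g ∈ M, g.1 = f.1 → G.pI f.1 f g := by
    intro g hg h1
    have : g = e := uniq1 G hM.1 hg heM (h1.trans hf1)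
    rw [this, hf1]
    exact hpf
  have hI' : ∀ g ∈ M, g.2 = f.2 → G.pJ f.2 f g → G.pJ f.2 f g := fun _ _ _ h => h
  -- f does not block M, its I-condition holds, so J-condition fails
  obtain ⟨h, hhM, hh2, hpj⟩ : ∃ h ∈ M, h.2 = f.2 ∧ G.pJ f.2 h f := by
    have hnb := hM.2 f
    unfold Blocks at hnb
    push_neg at hnb
    obtain ⟨h, hhM, hh2, hnp⟩ := hnb (hL.1.1 hfL) hfM hJcond
    have hne : h ≠ f := fun hq => hfM (hq ▸ hhM)
    rcases G.pJ_total f.2 f h (hL.1.1 hfL) (hM.1.1 hhM) rfl hh2 hne.symm with h' | h'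
    · exact absurd h' hnp
    · exact ⟨h, hhM, hh2, h'⟩
  refine chain_false G hL hM (f, h) ⟨hfL, hhM, hh2, hpj⟩ ?_
  intro p hp heq
  have hp2 : p.2 = e := uniq1 G hM.1 hp.2.1 heM (heq.trans hf1)
  exact hc p.1 hp.1 (hp.2.2.1.symm.trans (by rw [hp2]))

lemma image1_eq {M L : Finset (I × J)} [DecidableEq I] (hM : IsStable G M) (hL : IsStable G L) :
    M.image Prod.fst = L.image Prod.fst := by
  ext m
  simp only [Finset.mem_image]
  constructor
  · rintro ⟨e, he, rfl⟩
    obtain ⟨f, hf, h1⟩ := cover_I G hM hL e he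
    exact ⟨f, hf, h1⟩
  · rintro ⟨e, he, rfl⟩
    obtain ⟨f, hf, h1⟩ := cover_I G hL hM e he
    exact ⟨f, hf, h1⟩

lemma image2_eq {M L : Finset (I × J)} [DecidableEq J] (hM : IsStable G M) (hL : IsStable G L) :
    M.image Prod.snd = L.image Prod.snd := by
  ext w
  simp only [Finset.mem_image]
  constructor
  · rintro ⟨e, he, rfl⟩
    obtain ⟨f, hf, h1⟩ := cover_J G hM hL e he
    exact ⟨f, hf, h1⟩
  · rintro ⟨e, he, rfl⟩
    obtain ⟨f, hf, h1⟩ := cover_J G hL hM e he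
    exact ⟨f, hf, h1⟩

lemma card_img1 {M : Finset (I × J)} [DecidableEq I] (hM : IsMatching G M) :
    (M.image Prod.fst).card = M.card :=
  Finset.card_image_of_injOn (fun e he f hf h => uniq1 G hM he hf h)

lemma card_img2 {M : Finset (I × J)} [DecidableEq J] (hM : IsMatching G M) :
    (M.image Prod.snd).card = M.card :=
  Finset.card_image_of_injOn (fun e he f hf h => uniq2 G hM he hf h)

end StableLattice
namespace StableLattice
set_option linter.unusedSectionVars false
set_option linter.unusedVariables false

variable {I J : Type} [Fintype I] [Fintype J] (G : PrefSystem I J)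

noncomputable def meetF (M L : Finset (I × J)) : Finset (I × J) :=
  @Finset.filter _ (MeetCond G M L) (Classical.decPred _) G.E

noncomputable def joinF (M L : Finset (I × J)) : Finset (I × J) :=
  @Finset.filter _ (JoinCond G M L) (Classical.decPred _) G.E

lemma meetCond_memE {M L : Finset (I × J)} (hM : IsMatching G M) (hL : IsMatching G L)
    {e : I × J} (h : MeetCond G M L e) : e ∈ G.E := by
  rcases h with ⟨h, _⟩ | ⟨h, _⟩ | ⟨h, _⟩
  exacts [hM.1 h, hM.1 h, hL.1 h]

lemma joinCond_memE {M L : Finset (I × J)} (hM : IsMatching G M) (hL : IsMatching G L)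
    {e : I × J} (h : JoinCond G M L e) : e ∈ G.E := by
  rcases h with ⟨h, _⟩ | ⟨h, _⟩ | ⟨h, _⟩
  exacts [hM.1 h, hM.1 h, hL.1 h]

lemma mem_meetF {M L : Finset (I × J)} (hM : IsMatching G M) (hL : IsMatching G L)
    {e : I × J} : e ∈ meetF G M L ↔ MeetCond G M L e := by
  simp only [meetF, Finset.mem_filter]
  exact ⟨fun h => h.2, fun h => ⟨meetCond_memE G hM hL h, h⟩⟩

lemma mem_joinF {M L : Finset (I × J)} (hM : IsMatching G M) (hL : IsMatching G L)
    {e : I × J} : e ∈ joinF G M L ↔ JoinCond G M L e := by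
  simp only [joinF, Finset.mem_filter]
  exact ⟨fun h => h.2, fun h => ⟨joinCond_memE G hM hL h, h⟩⟩

lemma meetCond_comm {M L : Finset (I × J)} {e : I × J}
    (h : MeetCond G M L e) : MeetCond G L M e := by
  rcases h with ⟨h1, h2⟩ | ⟨h1, h2⟩ | ⟨h1, h2⟩
  · exact Or.inl ⟨h2, h1⟩
  · exact Or.inr (Or.inr ⟨h1, h2⟩)
  · exact Or.inr (Or.inl ⟨h1, h2⟩)

lemma joinCond_comm {M L : Finset (I × J)} {e : I × J}
    (h : JoinCond G M L e) : JoinCond G L M e := by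
  rcases h with ⟨h1, h2⟩ | ⟨h1, h2⟩ | ⟨h1, h2⟩
  · exact Or.inl ⟨h2, h1⟩
  · exact Or.inr (Or.inr ⟨h1, h2⟩)
  · exact Or.inr (Or.inl ⟨h1, h2⟩)

lemma meet_sub {M L : Finset (I × J)} {e : I × J}
    (h : MeetCond G M L e) : e ∈ M ∨ e ∈ L := by
  rcases h with ⟨h, _⟩ | ⟨h, _⟩ | ⟨h, _⟩
  exacts [Or.inl h, Or.inl h, Or.inr h]

lemma join_sub {M L : Finset (I × J)} {e : I × J}
    (h : JoinCond G M L e) : e ∈ M ∨ e ∈ L := by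
  rcases h with ⟨h, _⟩ | ⟨h, _⟩ | ⟨h, _⟩
  exacts [Or.inl h, Or.inl h, Or.inr h]

/-- the meet choice weakly beats the `M`-edge at the same `I`-vertex -/
lemma meetCond_bestM {M L : Finset (I × J)} (hM : IsMatching G M) (hL : IsMatching G L)
    {e f : I × J} (he : MeetCond G M L e) (hf : f ∈ M) (h1 : f.1 = e.1) :
    e = f ∨ G.pI e.1 e f := by
  rcases he with ⟨heM, _⟩ | ⟨heM, _⟩ | ⟨heL, g, hgM, hg1, hpi⟩
  · exact Or.inl (uniq1 G hM heM hf h1.symm)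
  · exact Or.inl (uniq1 G hM heM hf h1.symm)
  · have : f = g := uniq1 G hM hf hgM (h1.trans hg1.symm)
    rw [this]; exact Or.inr hpi

lemma meetCond_bestL {M L : Finset (I × J)} (hM : IsMatching G M) (hL : IsMatching G L)
    {e f : I × J} (he : MeetCond G M L e) (hf : f ∈ L) (h1 : f.1 = e.1) :
    e = f ∨ G.pI e.1 e f :=
  meetCond_bestM G hL hM (meetCond_comm G he) hf h1

/-- the join choice is weakly beaten by the `M`-edge at the same `I`-vertex -/
lemma joinCond_worstM {M L : Finset (I × J)} (hM : IsMatching G M) (hL : IsMatching G L)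
    {e f : I × J} (he : JoinCond G M L e) (hf : f ∈ M) (h1 : f.1 = e.1) :
    e = f ∨ G.pI e.1 f e := by
  rcases he with ⟨heM, _⟩ | ⟨heM, _⟩ | ⟨heL, g, hgM, hg1, hpi⟩
  · exact Or.inl (uniq1 G hM heM hf h1.symm)
  · exact Or.inl (uniq1 G hM heM hf h1.symm)
  · have : f = g := uniq1 G hM hf hgM (h1.trans hg1.symm)
    rw [this]; exact Or.inr hpi

lemma joinCond_worstL {M L : Finset (I × J)} (hM : IsMatching G M) (hL : IsMatching G L)
    {e f : I × J} (he : JoinCond G M L e) (hf : f ∈ L) (h1 : f.1 = e.1) :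
    e = f ∨ G.pI e.1 f e :=
  joinCond_worstM G hL hM (joinCond_comm G he) hf h1

lemma meet_uniq1 {M L : Finset (I × J)} (hM : IsStable G M) (hL : IsStable G L)
    {e f : I × J} (he : MeetCond G M L e) (hf : MeetCond G M L f) (h1 : e.1 = f.1) :
    e = f := by
  have w1 : e = f ∨ G.pI e.1 e f := by
    rcases meet_sub G hf with hfm | hfm
    · exact meetCond_bestM G hM.1 hL.1 he hfm h1.symm
    · exact meetCond_bestL G hM.1 hL.1 he hfm h1.symm
  have w2 : f = e ∨ G.pI f.1 f e := by
    rcases meet_sub G he with hem | hem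
    · exact meetCond_bestM G hM.1 hL.1 hf hem h1
    · exact meetCond_bestL G hM.1 hL.1 hf hem h1
  rcases w1 with h | h
  · exact h
  · rcases w2 with h' | h'
    · exact h'.symm
    · rw [h1] at h; exact absurd h (fun hh => pI_asymm G hh h')

lemma join_uniq1 {M L : Finset (I × J)} (hM : IsStable G M) (hL : IsStable G L)
    {e f : I × J} (he : JoinCond G M L e) (hf : JoinCond G M L f) (h1 : e.1 = f.1) :
    e = f := by
  have w2 : e = f ∨ G.pI e.1 f e := by
    rcases join_sub G hf with hfm | hfm
    · exact joinCond_worstM G hM.1 hL.1 he hfm h1.symm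
    · exact joinCond_worstL G hM.1 hL.1 he hfm h1.symm
  have w1 : f = e ∨ G.pI f.1 e f := by
    rcases join_sub G he with hem | hem
    · exact joinCond_worstM G hM.1 hL.1 hf hem h1
    · exact joinCond_worstL G hM.1 hL.1 hf hem h1
  rcases w2 with h | h
  · exact h
  · rcases w1 with h' | h'
    · exact h'.symm
    · rw [← h1] at h'; exact absurd h (fun hh => pI_asymm G hh h')

/-- auxiliary: two distinct meet-chosen edges cannot share a `J`-vertex, main case -/
lemma meet_uniq2_aux {M L : Finset (I × J)} (hM : IsStable G M) (hL : IsStable G L)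
    {e f : I × J} (he : MeetCond G M L e) (hf : MeetCond G M L f)
    (heM : e ∈ M) (hfL : f ∈ L) (h2 : e.2 = f.2) (hne : e ≠ f)
    (hpj : G.pJ e.2 e f) : False := by
  have heL : e ∉ L := by
    intro h
    exact hne (uniq2 G hL.1 h hfL h2)
  rcases he with ⟨_, h⟩ | ⟨_, g, hgL, hg1, hpi⟩ | ⟨h, _⟩
  · exact heL h
  · -- e blocks L
    refine hL.2 e ⟨hM.1.1 heM, heL, ?_, ?_⟩
    · intro h hh h1
      have : h = g := uniq1 G hL.1 hh hgL (h1.trans hg1.symm)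
      rw [this]; exact hpi
    · intro h hh hh2
      have : h = f := uniq2 G hL.1 hh hfL (hh2.trans h2)
      rw [this]; exact hpj
  · exact heL h

lemma meet_uniq2 {M L : Finset (I × J)} (hM : IsStable G M) (hL : IsStable G L)
    {e f : I × J} (he : MeetCond G M L e) (hf : MeetCond G M L f) (h2 : e.2 = f.2) :
    e = f := by
  by_contra hne
  have main : ∀ (M' L' : Finset (I × J)), IsStable G M' → IsStable G L' →
      ∀ e' f' : I × J, MeetCond G M' L' e' → MeetCond G M' L' f' →
      e' ∈ M' → f' ∈ L' → e'.2 = f'.2 → e' ≠ f' → False := by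
    intro M' L' hM' hL' e' f' he' hf' heM' hfL' h2' hne'
    have hE : e' ∈ G.E := hM'.1.1 heM'
    have hF : f' ∈ G.E := hL'.1.1 hfL'
    rcases G.pJ_total e'.2 e' f' hE hF rfl h2'.symm hne' with h | h
    · exact meet_uniq2_aux G hM' hL' he' hf' heM' hfL' h2' hne' h
    · have h' : G.pJ f'.2 f' e' := by rw [← h2']; exact h
      exact meet_uniq2_aux G hL' hM' (meetCond_comm G hf') (meetCond_comm G he')
        hfL' heM' h2'.symm (Ne.symm hne') h'
  rcases meet_sub G he with hem | hel <;> rcases meet_sub G hf with hfm | hfl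
  · exact hne (uniq2 G hM.1 hem hfm h2)
  · exact main M L hM hL e f he hf hem hfl h2 hne
  · exact main L M hL hM e f (meetCond_comm G he) (meetCond_comm G hf) hel hfm h2 hne
  · exact hne (uniq2 G hL.1 hel hfl h2)

lemma meet_matching {M L : Finset (I × J)} (hM : IsStable G M) (hL : IsStable G L) :
    IsMatching G (meetF G M L) := by
  refine ⟨fun e he => meetCond_memE G hM.1 hL.1 ((mem_meetF G hM.1 hL.1).1 he), ?_⟩
  intro e he f hf hne
  rw [mem_meetF G hM.1 hL.1] at he hf
  constructor
  · intro h1; exact hne (meet_uniq1 G hM hL he hf h1)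
  · intro h2; exact hne (meet_uniq2 G hM hL he hf h2)

end StableLattice
namespace StableLattice
set_option linter.unusedSectionVars false
set_option linter.unusedVariables false

variable {I J : Type} [Fintype I] [Fintype J] [DecidableEq I] [DecidableEq J]
  (G : PrefSystem I J)

lemma meet_image1 {M L : Finset (I × J)} (hM : IsStable G M) (hL : IsStable G L) :
    (meetF G M L).image Prod.fst = M.image Prod.fst := by
  ext m
  simp only [Finset.mem_image]
  constructor
  · rintro ⟨e, he, rfl⟩
    rcases meet_sub G ((mem_meetF G hM.1 hL.1).1 he) with h | h
    · exact ⟨e, h, rfl⟩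
    · obtain ⟨f, hf, h1⟩ := cover_I G hL hM e h
      exact ⟨f, hf, h1⟩
  · rintro ⟨e, he, rfl⟩
    obtain ⟨f, hfL, hf1⟩ := cover_I G hM hL e he
    by_cases hef : e = f
    · exact ⟨e, (mem_meetF G hM.1 hL.1).2 (Or.inl ⟨he, hef ▸ hfL⟩), rfl⟩
    · rcases G.pI_total e.1 e f (hM.1.1 he) (hL.1.1 hfL) rfl hf1 hef with h | h
      · exact ⟨e, (mem_meetF G hM.1 hL.1).2 (Or.inr (Or.inl ⟨he, f, hfL, hf1, h⟩)), rfl⟩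
      · refine ⟨f, (mem_meetF G hM.1 hL.1).2 (Or.inr (Or.inr ⟨hfL, e, he, ?_, ?_⟩)), hf1⟩
        · exact hf1.symm
        · rw [hf1]; exact h

lemma meet_card {M L : Finset (I × J)} (hM : IsStable G M) (hL : IsStable G L) :
    (meetF G M L).card = M.card := by
  rw [← card_img1 G (meet_matching G hM hL), meet_image1 G hM hL, card_img1 G hM.1]

lemma meet_image2 {M L : Finset (I × J)} (hM : IsStable G M) (hL : IsStable G L) :
    (meetF G M L).image Prod.snd = M.image Prod.snd := by
  apply Finset.eq_of_subset_of_card_le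
  · intro w hw
    obtain ⟨e, he, rfl⟩ := Finset.mem_image.1 hw
    rcases meet_sub G ((mem_meetF G hM.1 hL.1).1 he) with h | h
    · exact Finset.mem_image_of_mem _ h
    · rw [image2_eq G hM hL]; exact Finset.mem_image_of_mem _ h
  · apply le_of_eq
    rw [card_img2 G hM.1, card_img2 G (meet_matching G hM hL), meet_card G hM hL]

lemma join_image1 {M L : Finset (I × J)} (hM : IsStable G M) (hL : IsStable G L) :
    (joinF G M L).image Prod.fst = M.image Prod.fst := by
  ext m
  simp only [Finset.mem_image]
  constructor
  · rintro ⟨e, he, rfl⟩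
    rcases join_sub G ((mem_joinF G hM.1 hL.1).1 he) with h | h
    · exact ⟨e, h, rfl⟩
    · obtain ⟨f, hf, h1⟩ := cover_I G hL hM e h
      exact ⟨f, hf, h1⟩
  · rintro ⟨e, he, rfl⟩
    obtain ⟨f, hfL, hf1⟩ := cover_I G hM hL e he
    by_cases hef : e = f
    · exact ⟨e, (mem_joinF G hM.1 hL.1).2 (Or.inl ⟨he, hef ▸ hfL⟩), rfl⟩
    · rcases G.pI_total e.1 e f (hM.1.1 he) (hL.1.1 hfL) rfl hf1 hef with h | h
      · refine ⟨f, (mem_joinF G hM.1 hL.1).2 (Or.inr (Or.inr ⟨hfL, e, he, ?_, ?_⟩)), hf1⟩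
        · exact hf1.symm
        · rw [hf1]; exact h
      · exact ⟨e, (mem_joinF G hM.1 hL.1).2 (Or.inr (Or.inl ⟨he, f, hfL, hf1, h⟩)), rfl⟩

end StableLattice
namespace StableLattice
set_option linter.unusedSectionVars false
set_option linter.unusedVariables false

variable {I J : Type} [Fintype I] [Fintype J] [DecidableEq I] [DecidableEq J]
  (G : PrefSystem I J)

/-- the meet choice is weakly beaten at its `J`-vertex by the `L`-edge there -/
lemma meetCond_worstL {M L : Finset (I × J)} (hM : IsStable G M) (hL : IsStable G L)
    {n f : I × J} (hn : MeetCond G M L n) (hf : f ∈ L) (h2 : f.2 = n.2) :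
    n = f ∨ G.pJ n.2 f n := by
  by_cases hnL : n ∈ L
  · exact Or.inl (uniq2 G hL.1 hnL hf h2.symm)
  · rcases hn with ⟨_, h⟩ | ⟨hnM, g, hgL, hg1, hpi⟩ | ⟨h, _⟩
    · exact absurd h hnL
    · obtain ⟨f', hf'L, hf'2, hpj⟩ := exists_pref_J G hL (hM.1.1 hnM) hnL
        (by
          intro h hh h1
          have : h = g := uniq1 G hL.1 hh hgL (h1.trans hg1.symm)
          rw [this]; exact hpi)
      have : f' = f := uniq2 G hL.1 hf'L hf (hf'2.trans h2.symm)
      rw [← this]; exact Or.inr hpj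
    · exact absurd h hnL

lemma meetCond_worstM {M L : Finset (I × J)} (hM : IsStable G M) (hL : IsStable G L)
    {n f : I × J} (hn : MeetCond G M L n) (hf : f ∈ M) (h2 : f.2 = n.2) :
    n = f ∨ G.pJ n.2 f n :=
  meetCond_worstL G hL hM (meetCond_comm G hn) hf h2

lemma join_uniq2_aux {M L : Finset (I × J)} (hM : IsStable G M) (hL : IsStable G L)
    {e f : I × J} (he : JoinCond G M L e) (hf : JoinCond G M L f)
    (heM : e ∈ M) (hfL : f ∈ L) (h2 : e.2 = f.2) (hne : e ≠ f) : False := by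
  have heL : e ∉ L := fun h => hne (uniq2 G hL.1 h hfL h2)
  have hfM : f ∉ M := fun h => hne (uniq2 G hM.1 heM h h2)
  rcases he with ⟨_, h⟩ | ⟨_, g, hgL, hg1, hpi⟩ | ⟨h, _⟩
  · exact heL h
  · rcases hf with ⟨h, _⟩ | ⟨h, _⟩ | ⟨_, g', hg'M, hg'1, hpi'⟩
    · exact hfM h
    · exact hfM h
    · have hw : e.2 ∈ (meetF G M L).image Prod.snd := by
        rw [meet_image2 G hM hL]
        exact Finset.mem_image_of_mem _ heM
      obtain ⟨n, hn, hn2⟩ := Finset.mem_image.1 hw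
      have hncond := (mem_meetF G hM.1 hL.1).1 hn
      rcases meet_sub G hncond with hnM | hnL
      · have hne' : n = e := uniq2 G hM.1 hnM heM hn2
        rw [hne'] at hncond
        rcases hncond with ⟨_, h⟩ | ⟨_, g2, hg2L, hg21, hpi2⟩ | ⟨h, _⟩
        · exact heL h
        · have : g2 = g := uniq1 G hL.1 hg2L hgL (hg21.trans hg1.symm)
          rw [this] at hpi2
          exact pI_asymm G hpi2 hpi
        · exact heL h
      · have hnf : n = f := uniq2 G hL.1 hnL hfL (hn2.trans h2)
        rw [hnf] at hncond
        rcases hncond with ⟨h, _⟩ | ⟨h, _⟩ | ⟨_, g2, hg2M, hg21, hpi2⟩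
        · exact hfM h
        · exact hfM h
        · have : g2 = g' := uniq1 G hM.1 hg2M hg'M (hg21.trans hg'1.symm)
          rw [this] at hpi2
          exact pI_asymm G hpi2 hpi'
  · exact heL h

lemma join_uniq2 {M L : Finset (I × J)} (hM : IsStable G M) (hL : IsStable G L)
    {e f : I × J} (he : JoinCond G M L e) (hf : JoinCond G M L f) (h2 : e.2 = f.2) :
    e = f := by
  by_contra hne
  rcases join_sub G he with hem | hel <;> rcases join_sub G hf with hfm | hfl
  · exact hne (uniq2 G hM.1 hem hfm h2)
  · exact join_uniq2_aux G hM hL he hf hem hfl h2 hne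
  · exact join_uniq2_aux G hL hM (joinCond_comm G he) (joinCond_comm G hf) hel hfm h2 hne
  · exact hne (uniq2 G hL.1 hel hfl h2)

lemma join_matching {M L : Finset (I × J)} (hM : IsStable G M) (hL : IsStable G L) :
    IsMatching G (joinF G M L) := by
  refine ⟨fun e he => joinCond_memE G hM.1 hL.1 ((mem_joinF G hM.1 hL.1).1 he), ?_⟩
  intro e he f hf hne
  rw [mem_joinF G hM.1 hL.1] at he hf
  constructor
  · intro h1; exact hne (join_uniq1 G hM hL he hf h1)
  · intro h2; exact hne (join_uniq2 G hM hL he hf h2)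

lemma join_card {M L : Finset (I × J)} (hM : IsStable G M) (hL : IsStable G L) :
    (joinF G M L).card = M.card := by
  rw [← card_img1 G (join_matching G hM hL), join_image1 G hM hL, card_img1 G hM.1]

lemma join_image2 {M L : Finset (I × J)} (hM : IsStable G M) (hL : IsStable G L) :
    (joinF G M L).image Prod.snd = M.image Prod.snd := by
  apply Finset.eq_of_subset_of_card_le
  · intro w hw
    obtain ⟨e, he, rfl⟩ := Finset.mem_image.1 hw
    rcases join_sub G ((mem_joinF G hM.1 hL.1).1 he) with h | h
    · exact Finset.mem_image_of_mem _ h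
    · rw [image2_eq G hM hL]; exact Finset.mem_image_of_mem _ h
  · apply le_of_eq
    rw [card_img2 G hM.1, card_img2 G (join_matching G hM hL), join_card G hM hL]

/-- the join choice weakly beats the `M`-edge at the same `J`-vertex -/
lemma join_bestJ_M {M L : Finset (I × J)} (hM : IsStable G M) (hL : IsStable G L)
    {e f : I × J} (he : JoinCond G M L e) (hf : f ∈ M) (h2 : f.2 = e.2) :
    e = f ∨ G.pJ e.2 e f := by
  by_cases heM : e ∈ M
  · exact Or.inl (uniq2 G hM.1 heM hf h2.symm)
  · rcases he with ⟨h, _⟩ | ⟨h, _⟩ | ⟨heL, g', hg'M, hg'1, hpi'⟩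
    · exact absurd h heM
    · exact absurd h heM
    · have hw : e.2 ∈ (meetF G M L).image Prod.snd := by
        rw [meet_image2 G hM hL, ← h2]
        exact Finset.mem_image_of_mem _ hf
      obtain ⟨n, hn, hn2⟩ := Finset.mem_image.1 hw
      have hncond := (mem_meetF G hM.1 hL.1).1 hn
      rcases meet_sub G hncond with hnM | hnL
      · have hnf : n = f := uniq2 G hM.1 hnM hf (hn2.trans h2.symm)
        rw [hnf] at hncond hn2
        rcases meetCond_worstL G hM hL hncond heL hn2.symm with h | h
        · exact Or.inl h.symm
        · rw [hn2] at h; exact Or.inr h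
      · exfalso
        have hne' : n = e := uniq2 G hL.1 hnL heL hn2
        rw [hne'] at hncond
        rcases hncond with ⟨h, _⟩ | ⟨h, _⟩ | ⟨_, g2, hg2M, hg21, hpi2⟩
        · exact heM h
        · exact heM h
        · have : g2 = g' := uniq1 G hM.1 hg2M hg'M (hg21.trans hg'1.symm)
          rw [this] at hpi2
          exact pI_asymm G hpi2 hpi'

lemma join_bestJ_L {M L : Finset (I × J)} (hM : IsStable G M) (hL : IsStable G L)
    {e f : I × J} (he : JoinCond G M L e) (hf : f ∈ L) (h2 : f.2 = e.2) :
    e = f ∨ G.pJ e.2 e f := by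
  by_cases heL : e ∈ L
  · exact Or.inl (uniq2 G hL.1 heL hf h2.symm)
  · rcases he with ⟨_, h⟩ | ⟨heM, g', hg'L, hg'1, hpi'⟩ | ⟨h, _⟩
    · exact absurd h heL
    · have hw : e.2 ∈ (meetF G M L).image Prod.snd := by
        rw [meet_image2 G hM hL, image2_eq G hM hL, ← h2]
        exact Finset.mem_image_of_mem _ hf
      obtain ⟨n, hn, hn2⟩ := Finset.mem_image.1 hw
      have hncond := (mem_meetF G hM.1 hL.1).1 hn
      rcases meet_sub G hncond with hnM | hnL
      · exfalso
        have hne' : n = e := uniq2 G hM.1 hnM heM hn2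
        rw [hne'] at hncond
        rcases hncond with ⟨_, h⟩ | ⟨_, g2, hg2L, hg21, hpi2⟩ | ⟨h, _⟩
        · exact heL h
        · have : g2 = g' := uniq1 G hL.1 hg2L hg'L (hg21.trans hg'1.symm)
          rw [this] at hpi2
          exact pI_asymm G hpi2 hpi'
        · exact heL h
      · have hnf : n = f := uniq2 G hL.1 hnL hf (hn2.trans h2.symm)
        rw [hnf] at hncond hn2
        rcases meetCond_worstM G hM hL hncond heM hn2.symm with h | h
        · exact Or.inl h.symm
        · rw [hn2] at h; exact Or.inr h
    · exact absurd h heL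

end StableLattice
namespace StableLattice
set_option linter.unusedSectionVars false
set_option linter.unusedVariables false

variable {I J : Type} [Fintype I] [Fintype J] [DecidableEq I] [DecidableEq J]
  (G : PrefSystem I J)

lemma meet_stable {M L : Finset (I × J)} (hM : IsStable G M) (hL : IsStable G L) :
    IsStable G (meetF G M L) := by
  refine ⟨meet_matching G hM hL, ?_⟩
  rintro g ⟨hgE, hgN, hIb, hJb⟩
  have hcov1 : ∀ x : I × J, (x ∈ M ∨ x ∈ L) → x.1 = g.1 →
      ∃ n ∈ meetF G M L, n.1 = g.1 := by
    intro x hx h1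
    have : g.1 ∈ (meetF G M L).image Prod.fst := by
      rw [meet_image1 G hM hL]
      rcases hx with h | h
      · exact Finset.mem_image.2 ⟨x, h, h1⟩
      · rw [image1_eq G hM hL]; exact Finset.mem_image.2 ⟨x, h, h1⟩
    exact Finset.mem_image.1 this
  have hgM : g ∉ M := by
    intro hgM
    obtain ⟨n, hnN, hn1⟩ := hcov1 g (Or.inl hgM) rfl
    have hpi := hIb n hnN hn1
    rcases meetCond_bestM G hM.1 hL.1 ((mem_meetF G hM.1 hL.1).1 hnN) hgM hn1.symm with h | h
    · rw [h] at hnN; exact hgN hnN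
    · rw [hn1] at h; exact pI_asymm G h hpi
  have hgL : g ∉ L := by
    intro hgL
    obtain ⟨n, hnN, hn1⟩ := hcov1 g (Or.inr hgL) rfl
    have hpi := hIb n hnN hn1
    rcases meetCond_bestL G hM.1 hL.1 ((mem_meetF G hM.1 hL.1).1 hnN) hgL hn1.symm with h | h
    · rw [h] at hnN; exact hgN hnN
    · rw [hn1] at h; exact pI_asymm G h hpi
  have hIc : ∀ f : I × J, (f ∈ M ∨ f ∈ L) → f.1 = g.1 → G.pI g.1 g f := by
    intro f hfml h1
    obtain ⟨n, hnN, hn1⟩ := hcov1 f hfml h1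
    have hpi := hIb n hnN hn1
    have hbest : n = f ∨ G.pI n.1 n f := by
      rcases hfml with h | h
      · exact meetCond_bestM G hM.1 hL.1 ((mem_meetF G hM.1 hL.1).1 hnN) h (h1.trans hn1.symm)
      · exact meetCond_bestL G hM.1 hL.1 ((mem_meetF G hM.1 hL.1).1 hnN) h (h1.trans hn1.symm)
    rcases hbest with h | h
    · rw [← h]; exact hpi
    · rw [hn1] at h; exact G.pI_trans _ _ _ _ hpi h
  by_cases hw : ∃ n ∈ meetF G M L, n.2 = g.2
  · obtain ⟨n, hnN, hn2⟩ := hw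
    have hpj := hJb n hnN hn2
    rcases meet_sub G ((mem_meetF G hM.1 hL.1).1 hnN) with hnM | hnL
    · refine hM.2 g ⟨hgE, hgM, fun f hf h1 => hIc f (Or.inl hf) h1, ?_⟩
      intro f hf h2
      have : f = n := uniq2 G hM.1 hf hnM (h2.trans hn2.symm)
      rw [this]; exact hpj
    · refine hL.2 g ⟨hgE, hgL, fun f hf h1 => hIc f (Or.inr hf) h1, ?_⟩
      intro f hf h2
      have : f = n := uniq2 G hL.1 hf hnL (h2.trans hn2.symm)
      rw [this]; exact hpj
  · refine hM.2 g ⟨hgE, hgM, fun f hf h1 => hIc f (Or.inl hf) h1, ?_⟩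
    intro f hf h2
    exfalso
    apply hw
    have : g.2 ∈ (meetF G M L).image Prod.snd := by
      rw [meet_image2 G hM hL]; exact Finset.mem_image.2 ⟨f, hf, h2⟩
    exact Finset.mem_image.1 this

lemma join_stable {M L : Finset (I × J)} (hM : IsStable G M) (hL : IsStable G L) :
    IsStable G (joinF G M L) := by
  refine ⟨join_matching G hM hL, ?_⟩
  rintro g ⟨hgE, hgN, hIb, hJb⟩
  have hcov2 : ∀ x : I × J, (x ∈ M ∨ x ∈ L) → x.2 = g.2 →
      ∃ n ∈ joinF G M L, n.2 = g.2 := by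
    intro x hx h2
    have : g.2 ∈ (joinF G M L).image Prod.snd := by
      rw [join_image2 G hM hL]
      rcases hx with h | h
      · exact Finset.mem_image.2 ⟨x, h, h2⟩
      · rw [image2_eq G hM hL]; exact Finset.mem_image.2 ⟨x, h, h2⟩
    exact Finset.mem_image.1 this
  have hgM : g ∉ M := by
    intro hgM
    obtain ⟨n, hnN, hn2⟩ := hcov2 g (Or.inl hgM) rfl
    have hpj := hJb n hnN hn2
    rcases join_bestJ_M G hM hL ((mem_joinF G hM.1 hL.1).1 hnN) hgM hn2.symm with h | h
    · rw [h] at hnN; exact hgN hnN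
    · rw [hn2] at h; exact pJ_asymm G h hpj
  have hgL : g ∉ L := by
    intro hgL
    obtain ⟨n, hnN, hn2⟩ := hcov2 g (Or.inr hgL) rfl
    have hpj := hJb n hnN hn2
    rcases join_bestJ_L G hM hL ((mem_joinF G hM.1 hL.1).1 hnN) hgL hn2.symm with h | h
    · rw [h] at hnN; exact hgN hnN
    · rw [hn2] at h; exact pJ_asymm G h hpj
  have hJc : ∀ f : I × J, (f ∈ M ∨ f ∈ L) → f.2 = g.2 → G.pJ g.2 g f := by
    intro f hfml h2
    obtain ⟨n, hnN, hn2⟩ := hcov2 f hfml h2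
    have hpj := hJb n hnN hn2
    have hbest : n = f ∨ G.pJ n.2 n f := by
      rcases hfml with h | h
      · exact join_bestJ_M G hM hL ((mem_joinF G hM.1 hL.1).1 hnN) h (h2.trans hn2.symm)
      · exact join_bestJ_L G hM hL ((mem_joinF G hM.1 hL.1).1 hnN) h (h2.trans hn2.symm)
    rcases hbest with h | h
    · rw [← h]; exact hpj
    · rw [hn2] at h; exact G.pJ_trans _ _ _ _ hpj h
  by_cases hm : ∃ n ∈ joinF G M L, n.1 = g.1
  · obtain ⟨n, hnN, hn1⟩ := hm
    have hpi := hIb n hnN hn1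
    rcases join_sub G ((mem_joinF G hM.1 hL.1).1 hnN) with hnM | hnL
    · refine hM.2 g ⟨hgE, hgM, ?_, fun f hf h2 => hJc f (Or.inl hf) h2⟩
      intro f hf h1
      have : f = n := uniq1 G hM.1 hf hnM (h1.trans hn1.symm)
      rw [this]; exact hpi
    · refine hL.2 g ⟨hgE, hgL, ?_, fun f hf h2 => hJc f (Or.inr hf) h2⟩
      intro f hf h1
      have : f = n := uniq1 G hL.1 hf hnL (h1.trans hn1.symm)
      rw [this]; exact hpi
  · refine hM.2 g ⟨hgE, hgM, ?_, fun f hf h2 => hJc f (Or.inl hf) h2⟩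
    intro f hf h1
    exfalso
    apply hm
    have : g.1 ∈ (joinF G M L).image Prod.fst := by
      rw [join_image1 G hM hL]; exact Finset.mem_image.2 ⟨f, hf, h1⟩
    exact Finset.mem_image.1 this

end StableLattice
namespace StableLattice
set_option linter.unusedSectionVars false
set_option linter.unusedVariables false

variable {I J : Type} [Fintype I] [Fintype J] [DecidableEq I] [DecidableEq J]
  (G : PrefSystem I J)

lemma preceq_refl {M : Finset (I × J)} (hM : IsStable G M) : Preceq G M M :=
  fun e he f hf h1 => Or.inl (uniq1 G hM.1 he hf h1)

lemma preceq_trans {M L P : Finset (I × J)} (hM : IsStable G M) (hL : IsStable G L)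
    (hP : IsStable G P) (h1 : Preceq G M L) (h2 : Preceq G L P) : Preceq G M P := by
  intro e he f hf h1'
  obtain ⟨l, hlL, hl1⟩ := cover_I G hM hL e he
  have w1 := h1 e he l hlL hl1.symm
  have w2 := h2 l hlL f hf (hl1.trans h1')
  have w2' : l = f ∨ G.pI e.1 l f := by
    rcases w2 with h | h
    · exact Or.inl h
    · rw [hl1] at h; exact Or.inr h
  have := WP_trans G (show WP G e.1 e l from w1) (show WP G e.1 l f from w2')
  exact this

lemma preceq_antisymm {M L : Finset (I × J)} (hM : IsStable G M) (hL : IsStable G L)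
    (h1 : Preceq G M L) (h2 : Preceq G L M) : M = L := by
  apply Finset.Subset.antisymm
  · intro e he
    obtain ⟨f, hfL, hf1⟩ := cover_I G hM hL e he
    rcases h1 e he f hfL hf1.symm with h | h
    · rw [h]; exact hfL
    · rcases h2 f hfL e he hf1 with h' | h'
      · rw [← h']; exact hfL
      · rw [hf1] at h'
        exact absurd h (fun hh => pI_asymm G hh h')
  · intro e he
    obtain ⟨f, hfM, hf1⟩ := cover_I G hL hM e he
    rcases h2 e he f hfM hf1.symm with h | h
    · rw [h]; exact hfM
    · rcases h1 f hfM e he hf1 with h' | h'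
      · rw [← h']; exact hfM
      · rw [hf1] at h'
        exact absurd h (fun hh => pI_asymm G hh h')

lemma le_sup_inf_key {A B C : Finset (I × J)} (hA : IsStable G A) (hB : IsStable G B)
    (hC : IsStable G C) :
    Preceq G (meetF G (joinF G A B) (joinF G A C)) (joinF G A (meetF G B C)) := by
  intro e he f hf h1
  have hAB : IsStable G (joinF G A B) := join_stable G hA hB
  have hAC : IsStable G (joinF G A C) := join_stable G hA hC
  have hBC : IsStable G (meetF G B C) := meet_stable G hB hC
  have heC := (mem_meetF G hAB.1 hAC.1).1 he
  have hfC := (mem_joinF G hA.1 hBC.1).1 hf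
  have hmA : ∃ a ∈ A, a.1 = e.1 := by
    rcases join_sub G hfC with h | h
    · exact ⟨f, h, h1.symm⟩
    · rcases meet_sub G ((mem_meetF G hB.1 hC.1).1 h) with h' | h'
      · obtain ⟨a, ha, ha1⟩ := cover_I G hB hA f h'
        exact ⟨a, ha, ha1.trans h1.symm⟩
      · obtain ⟨a, ha, ha1⟩ := cover_I G hC hA f h'
        exact ⟨a, ha, ha1.trans h1.symm⟩
  obtain ⟨a, haA, ha1⟩ := hmA
  obtain ⟨b, hbB, hb1'⟩ := cover_I G hA hB a haA
  obtain ⟨c, hcC, hc1'⟩ := cover_I G hA hC a haA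
  have hb1 : b.1 = e.1 := hb1'.trans ha1
  have hc1 : c.1 = e.1 := hc1'.trans ha1
  have hmu : ∃ u ∈ joinF G A B, u.1 = e.1 := by
    have : e.1 ∈ (joinF G A B).image Prod.fst := by
      rw [join_image1 G hA hB]; exact Finset.mem_image.2 ⟨a, haA, ha1⟩
    exact Finset.mem_image.1 this
  have hmv : ∃ v ∈ joinF G A C, v.1 = e.1 := by
    have : e.1 ∈ (joinF G A C).image Prod.fst := by
      rw [join_image1 G hA hC]; exact Finset.mem_image.2 ⟨a, haA, ha1⟩
    exact Finset.mem_image.1 this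
  have hms : ∃ s ∈ meetF G B C, s.1 = e.1 := by
    have : e.1 ∈ (meetF G B C).image Prod.fst := by
      rw [meet_image1 G hB hC]
      exact Finset.mem_image.2 ⟨b, hbB, hb1⟩
    exact Finset.mem_image.1 this
  obtain ⟨u, huJ, hu1⟩ := hmu
  obtain ⟨v, hvJ, hv1⟩ := hmv
  obtain ⟨s, hsN, hs1⟩ := hms
  have huC := (mem_joinF G hA.1 hB.1).1 huJ
  have hvC := (mem_joinF G hA.1 hC.1).1 hvJ
  have hsC := (mem_meetF G hB.1 hC.1).1 hsN
  -- weak preference facts, all at vertex e.1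
  have hEU : WP G e.1 e u := meetCond_bestM G hAB.1 hAC.1 heC huJ hu1
  have hEV : WP G e.1 e v := meetCond_bestL G hAB.1 hAC.1 heC hvJ hv1
  have hAF : WP G e.1 a f := by
    rcases joinCond_worstM G hA.1 hBC.1 hfC haA (ha1.trans h1) with h | h
    · exact Or.inl h.symm
    · rw [h1]; exact Or.inr h
  have hSF : WP G e.1 s f := by
    rcases joinCond_worstL G hA.1 hBC.1 hfC hsN (hs1.trans h1) with h | h
    · exact Or.inl h.symm
    · rw [h1]; exact Or.inr h
  have hua : u = a ∨ u = b := by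
    rcases join_sub G huC with h | h
    · exact Or.inl (uniq1 G hA.1 h haA (hu1.trans ha1.symm))
    · exact Or.inr (uniq1 G hB.1 h hbB (hu1.trans hb1.symm))
  have hva : v = a ∨ v = c := by
    rcases join_sub G hvC with h | h
    · exact Or.inl (uniq1 G hA.1 h haA (hv1.trans ha1.symm))
    · exact Or.inr (uniq1 G hC.1 h hcC (hv1.trans hc1.symm))
  have hsa : s = b ∨ s = c := by
    rcases meet_sub G hsC with h | h
    · exact Or.inl (uniq1 G hB.1 h hbB (hs1.trans hb1.symm))
    · exact Or.inr (uniq1 G hC.1 h hcC (hs1.trans hc1.symm))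
  show WP G e.1 e f
  rcases hua with hu | hu
  · exact WP_trans G (hu ▸ hEU) hAF
  · rcases hva with hv | hv
    · exact WP_trans G (hv ▸ hEV) hAF
    · have hEB : WP G e.1 e b := hu ▸ hEU
      have hEC : WP G e.1 e c := hv ▸ hEV
      have hES : WP G e.1 e s := by
        rcases hsa with hs | hs
        · rw [hs]; exact hEB
        · rw [hs]; exact hEC
      exact WP_trans G hES hSF

end StableLattice
open StableLattice in
/-- `M ∧ L` is a matching, and ∧/∨ make the set of stable
matchings of `G` into a distributive lattice whose order is `Preceq`. -/
theorem stable_matchings_distrib_lattice {I J : Type} [Fintype I] [Fintype J]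
    [DecidableEq I] [DecidableEq J] (G : PrefSystem I J) :
    (∀ M L N : Finset (I × J), IsStable G M → IsStable G L →
        (∀ e, e ∈ N ↔ MeetCond G M L e) → IsMatching G N) ∧
    ∃ inst : DistribLattice {M : Finset (I × J) // IsStable G M},
      (∀ M L : {M : Finset (I × J) // IsStable G M}, inst.le M L ↔ Preceq G M.1 L.1) ∧
      (∀ M L : {M : Finset (I × J) // IsStable G M}, ∀ e,
          e ∈ (inst.inf M L).1 ↔ MeetCond G M.1 L.1 e) ∧
      (∀ M L : {M : Finset (I × J) // IsStable G M}, ∀ e,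
          e ∈ (inst.sup M L).1 ↔ JoinCond G M.1 L.1 e) := by
  constructor
  · intro M L N hM hL hN
    have hNE : N = meetF G M L :=
      Finset.ext fun e => (hN e).trans (mem_meetF G hM.1 hL.1).symm
    rw [hNE]
    exact meet_matching G hM hL
  · refine ⟨{
      le := fun A B => Preceq G A.1 B.1,
      lt := fun A B => Preceq G A.1 B.1 ∧ ¬ Preceq G B.1 A.1,
      le_refl := fun A => preceq_refl G A.2,
      le_trans := fun A B C h1 h2 => preceq_trans G A.2 B.2 C.2 h1 h2,
      lt_iff_le_not_ge := fun _ _ => Iff.rfl,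
      le_antisymm := fun A B h1 h2 => Subtype.ext (preceq_antisymm G A.2 B.2 h1 h2),
      sup := fun A B => ⟨joinF G A.1 B.1, join_stable G A.2 B.2⟩,
      inf := fun A B => ⟨meetF G A.1 B.1, meet_stable G A.2 B.2⟩,
      le_sup_left := fun A B => by
        intro e he f hf h1
        rcases joinCond_worstM G A.2.1 B.2.1 ((mem_joinF G A.2.1 B.2.1).1 hf) he h1
          with h | h
        · exact Or.inl h.symm
        · rw [h1]; exact Or.inr h,
      le_sup_right := fun A B => by
        intro e he f hf h1
        rcases joinCond_worstL G A.2.1 B.2.1 ((mem_joinF G A.2.1 B.2.1).1 hf) he h1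
          with h | h
        · exact Or.inl h.symm
        · rw [h1]; exact Or.inr h,
      sup_le := fun A B C h1 h2 => by
        intro e he f hf he1
        rcases join_sub G ((mem_joinF G A.2.1 B.2.1).1 he) with h | h
        · exact h1 e h f hf he1
        · exact h2 e h f hf he1,
      inf_le_left := fun A B => by
        intro e he f hf h1
        exact meetCond_bestM G A.2.1 B.2.1 ((mem_meetF G A.2.1 B.2.1).1 he) hf h1.symm,
      inf_le_right := fun A B => by
        intro e he f hf h1
        exact meetCond_bestL G A.2.1 B.2.1 ((mem_meetF G A.2.1 B.2.1).1 he) hf h1.symm,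
      le_inf := fun A B C h1 h2 => by
        intro e he f hf he1
        rcases meet_sub G ((mem_meetF G B.2.1 C.2.1).1 hf) with h | h
        · exact h1 e he f h he1
        · exact h2 e he f h he1,
      le_sup_inf := fun A B C => by
        have key := le_sup_inf_key G A.2 B.2 C.2
        exact key }, ?_, ?_, ?_⟩
    · intro M L; exact Iff.rfl
    · intro M L e; exact mem_meetF G M.2.1 L.2.1
    · intro M L e; exact mem_joinF G M.2.1 L.2.1
end

section
/- The stable matching M₀ produced by the deferred-acceptance algorithm with side I proposing is I-optimal and J-pessimal: for every stable matching L and every vertex m ∈ I covered by stable matchings, M₀(m) ≤_m L(m), and for every covered w ∈ J, L(w) ≤_w M₀(w). -/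
variable {I J : Type}

lemma exists_best {α : Type} (r : α → α → Prop)
    (htr : ∀ a b c, r a b → r b c → r a c) :
    ∀ s : Finset α,
      (∀ a ∈ s, ∀ b ∈ s, a ≠ b → r a b ∨ r b a) → s.Nonempty →
      ∃ e ∈ s, ∀ f ∈ s, f ≠ e → r e f := by
  classical
  intro s
  induction s using Finset.induction_on with
  | empty => intro _ h; exact absurd h (by simp)
  | @insert a t ha ih =>
    intro htot _
    by_cases hte : t.Nonempty
    · obtain ⟨e, he, hbest⟩ := ih (fun x hx y hy => htot x (Finset.mem_insert_of_mem hx) y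
        (Finset.mem_insert_of_mem hy)) hte
      have hae : a ≠ e := fun h => ha (h ▸ he)
      rcases htot a (Finset.mem_insert_self a t) e (Finset.mem_insert_of_mem he) hae with h | h
      · refine ⟨a, Finset.mem_insert_self a t, ?_⟩
        intro f hf hfa
        rcases Finset.mem_insert.1 hf with rfl | hft
        · exact absurd rfl hfa
        · by_cases hfe : f = e
          · exact hfe ▸ h
          · exact htr a e f h (hbest f hft hfe)
      · refine ⟨e, Finset.mem_insert_of_mem he, ?_⟩
        intro f hf hfe
        rcases Finset.mem_insert.1 hf with rfl | hft
        · exact h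
        · exact hbest f hft hfe
    · refine ⟨a, Finset.mem_insert_self a t, ?_⟩
      intro f hf hfa
      rcases Finset.mem_insert.1 hf with rfl | hft
      · exact absurd rfl hfa
      · exact absurd ⟨f, hft⟩ hte


open Classical in
/-- The set of current proposals: each man's best edge among available edges `A`. -/
noncomputable def daProp (G : PrefSystem I J) (A : Finset (I × J)) : Finset (I × J) :=
  A.filter (fun e => ∀ f ∈ A, f.1 = e.1 → f ≠ e → G.pI e.1 e f)

lemma mem_daProp {G : PrefSystem I J} {A : Finset (I × J)} {e : I × J} :
    e ∈ daProp G A ↔ e ∈ A ∧ ∀ f ∈ A, f.1 = e.1 → f ≠ e → G.pI e.1 e f := by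
  classical
  simp [daProp]

lemma daProp_erase {G : PrefSystem I J} {A : Finset (I × J)} {e g : I × J}
    [DecidableEq I] [DecidableEq J]
    (hg : g ∈ daProp G A) (hge : g ≠ e) : g ∈ daProp G (A.erase e) := by
  rw [mem_daProp] at hg ⊢
  exact ⟨Finset.mem_erase.2 ⟨hge, hg.1⟩,
    fun f hf => hg.2 f (Finset.mem_of_mem_erase hf)⟩

/-- The deferred-acceptance recursion. -/
lemma daRec [DecidableEq I] [DecidableEq J] (G : PrefSystem I J) :
    ∀ A : Finset (I × J), A ⊆ G.E →
      (∀ e ∈ G.E, e ∉ A → ∃ f ∈ daProp G A, f.2 = e.2 ∧ G.pJ e.2 f e) →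
      ∃ B, B ⊆ A ∧
        (∀ e ∈ G.E, e ∉ B → ∃ f ∈ daProp G B, f.2 = e.2 ∧ G.pJ e.2 f e) ∧
        (∀ e ∈ daProp G B, ∀ f ∈ daProp G B, e.2 = f.2 → e = f) ∧
        (∀ L, IsStable G L → L ⊆ A → L ⊆ B) := by
  intro A
  induction A using Finset.strongInductionOn with
  | _ A ih =>
  intro hAE hInv
  by_cases hnr : ∀ e ∈ daProp G A, ∀ f ∈ daProp G A, e.2 = f.2 → e = f
  · exact ⟨A, subset_rfl, hInv, hnr, fun L _ h => h⟩
  push_neg at hnr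
  obtain ⟨e, he, f, hf, hef2, hefne⟩ := hnr
  -- key step, assuming `pJ e.2 f e` (woman e.2 rejects e in favor of f)
  have key : ∀ e f : I × J, e ∈ daProp G A → f ∈ daProp G A → e ≠ f → f.2 = e.2 →
      G.pJ e.2 f e →
      ∃ B, B ⊆ A ∧
        (∀ x ∈ G.E, x ∉ B → ∃ g ∈ daProp G B, g.2 = x.2 ∧ G.pJ x.2 g x) ∧
        (∀ x ∈ daProp G B, ∀ y ∈ daProp G B, x.2 = y.2 → x = y) ∧
        (∀ L, IsStable G L → L ⊆ A → L ⊆ B) := by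
    clear he hf hef2 hefne
    intro e f he hf hefne hf2 hrej
    have heA : e ∈ A := (mem_daProp.1 he).1
    have hfE : f ∈ daProp G (A.erase e) := daProp_erase hf (Ne.symm hefne)
    have hsub : A.erase e ⊂ A := Finset.erase_ssubset heA
    have hInv' : ∀ x ∈ G.E, x ∉ A.erase e →
        ∃ g ∈ daProp G (A.erase e), g.2 = x.2 ∧ G.pJ x.2 g x := by
      intro x hxE hx
      by_cases hxA : x ∈ A
      · have hxe : x = e := by
          by_contra hne
          exact hx (Finset.mem_erase.2 ⟨hne, hxA⟩)
        subst hxe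
        exact ⟨f, hfE, hf2, hrej⟩
      · obtain ⟨g, hg, hg2, hgp⟩ := hInv x hxE hxA
        by_cases hge : g = e
        · subst hge
          refine ⟨f, hfE, hf2.trans hg2, ?_⟩
          have : G.pJ x.2 f g := by rw [← hg2]; exact hrej
          exact G.pJ_trans x.2 f g x this hgp
        · exact ⟨g, daProp_erase hg hge, hg2, hgp⟩
    obtain ⟨B, hB1, hB2, hB3, hB4⟩ := ih (A.erase e) hsub
      ((Finset.erase_subset e A).trans hAE) hInv'
    refine ⟨B, hB1.trans (Finset.erase_subset e A), hB2, hB3, ?_⟩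
    intro L hL hLA
    refine hB4 L hL ?_
    intro x hxL
    refine Finset.mem_erase.2 ⟨?_, hLA hxL⟩
    rintro rfl
    -- f blocks L
    refine hL.2 f ⟨hAE (mem_daProp.1 hf).1, ?_, ?_, ?_⟩
    · intro hfL
      exact (hL.1.2 f hfL x hxL (Ne.symm hefne)).2 hf2
    · intro g hgL hg1
      have hgA : g ∈ A := hLA hgL
      have hgf : g ≠ f := by rintro rfl; exact (hL.1.2 g hgL x hxL (Ne.symm hefne)).2 hf2
      exact (mem_daProp.1 hf).2 g hgA hg1 hgf
    · intro g hgL hg2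
      have hgx : g = x := by
        by_contra hne
        exact (hL.1.2 g hgL x hxL hne).2 (hg2.trans hf2)
      subst hgx
      rw [← hg2]; exact hrej
  have heE : e ∈ G.E := hAE (mem_daProp.1 he).1
  have hfE : f ∈ G.E := hAE (mem_daProp.1 hf).1
  rcases G.pJ_total e.2 e f heE hfE rfl hef2.symm hefne with h | h
  · exact key f e hf he (Ne.symm hefne) hef2 (hef2 ▸ h)
  · exact key e f he hf hefne hef2.symm h


/-- there is a stable matching `M₀` (the one produced by deferred
acceptance with `I` proposing) which is `I`-optimal and `J`-pessimal: for every
stable matching `L`, every covered `m ∈ I` weakly prefers its `M₀`-edge to its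
`L`-edge, and every covered `w ∈ J` weakly prefers its `L`-edge to its `M₀`-edge. -/
theorem exists_I_optimal_J_pessimal {I J : Type} [Fintype I] [Fintype J]
    [DecidableEq I] [DecidableEq J] (G : PrefSystem I J) :
    ∃ M₀ : Finset (I × J), IsStable G M₀ ∧
      ∀ L : Finset (I × J), IsStable G L →
        (∀ e ∈ M₀, ∀ f ∈ L, e.1 = f.1 → e = f ∨ G.pI e.1 e f) ∧
        (∀ e ∈ M₀, ∀ f ∈ L, e.2 = f.2 → e = f ∨ G.pJ e.2 f e) := by
  classical
  obtain ⟨B, hBE, hInv, hnr, hLsub⟩ := daRec G G.E subset_rfl (fun e he h => absurd he h)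
  have hBE' : B ⊆ G.E := hBE
  set M₀ := daProp G B with hM₀
  have hM₀B : M₀ ⊆ B := fun x hx => (mem_daProp.1 hx).1
  have hLB : ∀ L, IsStable G L → L ⊆ B := fun L hL => hLsub L hL hL.1.1
  -- M₀ is a matching
  have hmatch : IsMatching G M₀ := by
    refine ⟨hM₀B.trans hBE', ?_⟩
    intro a ha b hb hab
    constructor
    · intro h1
      have h1' : G.pI a.1 a b := (mem_daProp.1 ha).2 b (hM₀B hb) h1.symm (Ne.symm hab)
      have h2' : G.pI a.1 b a := by
        have := (mem_daProp.1 hb).2 a (hM₀B ha) h1 hab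
        rwa [← h1] at this
      exact G.pI_irrefl a.1 a (G.pI_trans a.1 a b a h1' h2')
    · intro h2
      exact hab (hnr a ha b hb h2)
  -- M₀ is stable
  have hstable : IsStable G M₀ := by
    refine ⟨hmatch, ?_⟩
    rintro x ⟨hxE, hxM, hxI, hxJ⟩
    by_cases hxB : x ∈ B
    · -- x's man has a best edge g in B, g ∈ M₀
      set δ : Finset (I × J) := B.filter (fun y => y.1 = x.1) with hδ
      have hxδ : x ∈ δ := Finset.mem_filter.2 ⟨hxB, rfl⟩
      obtain ⟨g, hgδ, hgbest⟩ := exists_best (G.pI x.1) (G.pI_trans x.1) δ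
        (fun a haδ b hbδ hab => by
          obtain ⟨haB, ha1⟩ := Finset.mem_filter.1 haδ
          obtain ⟨hbB, hb1⟩ := Finset.mem_filter.1 hbδ
          exact G.pI_total x.1 a b (hBE' haB) (hBE' hbB) ha1 hb1 hab) ⟨x, hxδ⟩
      obtain ⟨hgB, hg1⟩ := Finset.mem_filter.1 hgδ
      have hgM : g ∈ M₀ := by
        rw [hM₀, mem_daProp]
        refine ⟨hgB, ?_⟩
        intro y hyB hy1 hyg
        have hyδ : y ∈ δ := Finset.mem_filter.2 ⟨hyB, hy1.trans hg1⟩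
        have := hgbest y hyδ hyg
        rwa [← hg1] at this
      by_cases hgx : g = x
      · exact hxM (hgx ▸ hgM)
      · have h1 : G.pI x.1 x g := hxI g hgM hg1
        have h2 : G.pI x.1 g x := hgbest x hxδ (Ne.symm hgx)
        exact G.pI_irrefl x.1 x (G.pI_trans x.1 x g x h1 h2)
    · obtain ⟨g, hg, hg2, hgp⟩ := hInv x hxE hxB
      have := hxJ g hg hg2
      exact G.pJ_irrefl x.2 x (G.pJ_trans x.2 x g x this hgp)
  refine ⟨M₀, hstable, ?_⟩
  intro L hL
  have hLB' : L ⊆ B := hLB L hL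
  constructor
  · intro a ha b hb h1
    by_cases hab : a = b
    · exact Or.inl hab
    · exact Or.inr ((mem_daProp.1 ha).2 b (hLB' hb) h1.symm (Ne.symm hab))
  · intro a ha b hb h2
    by_cases hab : a = b
    · exact Or.inl hab
    right
    have haE : a ∈ G.E := hBE' (hM₀B ha)
    have hbE : b ∈ G.E := hL.1.1 hb
    rcases G.pJ_total a.2 a b haE hbE rfl h2.symm hab with h | h
    · -- a blocks L: contradiction
      exfalso
      refine hL.2 a ⟨haE, ?_, ?_, ?_⟩
      · intro haL
        exact (hL.1.2 a haL b hb hab).2 h2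
      · intro g hgL hg1
        have hga : g ≠ a := by rintro rfl; exact (hL.1.2 g hgL b hb hab).2 h2
        exact (mem_daProp.1 ha).2 g (hLB' hgL) hg1 hga
      · intro g hgL hg2
        have hgb : g = b := by
          by_contra hne
          exact (hL.1.2 g hgL b hb hne).2 (hg2.trans h2)
        subst hgb
        exact h
    · exact h
end

section
/- If M and L are stable matchings with M ≺ L (every covered vertex in I weakly prefers M, with M ≠ L), then there is a rotation C in the active graph Γ(M) such that the stable matching M' obtained by exchanging along C satisfies M' ≼ L. -/
variable {I J : Type}

/-- `a = mw ∉ M` is admissible for `M`: `M` has an edge at `m` preferred to `a`,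
and either `w` is uncovered by `M` or `a` is preferred by `w` to its `M`-edge. -/
def Admissible (G : PrefSystem I J) (M : Finset (I × J)) (a : I × J) : Prop :=
  a ∈ G.E ∧ a ∉ M ∧ (∃ e ∈ M, e.1 = a.1 ∧ G.pI a.1 e a) ∧
    (∀ e ∈ M, e.2 = a.2 → G.pJ a.2 a e)

/-- `a` is the active edge at the vertex `a.1 ∈ I`: the most preferred
admissible edge incident to `a.1`. -/
def ActiveEdge (G : PrefSystem I J) (M : Finset (I × J)) (a : I × J) : Prop :=
  Admissible G M a ∧ ∀ b, Admissible G M b → b.1 = a.1 → b = a ∨ G.pI a.1 a b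

/-- `e` is an edge of the active graph `Γ(M)`: a matching edge or an active edge. -/
def InGamma (G : PrefSystem I J) (M : Finset (I × J)) (e : I × J) : Prop :=
  e ∈ M ∨ ActiveEdge G M e

/-- A rotation for `M`: a (simple, alternating) cycle of the active graph `Γ(M)`,
given as a cyclic sequence `c` of `k ≥ 2` distinct edges of `Γ(M)`, consecutive
edges sharing a vertex, alternating between `M`-edges and active edges, and such
that non-consecutive edges share no vertex. -/
def IsRotation (G : PrefSystem I J) (M : Finset (I × J))
    (k : ℕ) (c : ZMod k → I × J) : Prop :=
  2 ≤ k ∧ Function.Injective c ∧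
  (∀ i, InGamma G M (c i)) ∧
  (∀ i, (c i).1 = (c (i + 1)).1 ∨ (c i).2 = (c (i + 1)).2) ∧
  (∀ i, c i ∈ M ↔ c (i + 1) ∉ M) ∧
  (∀ i j : ZMod k, i ≠ j → ((c i).1 = (c j).1 ∨ (c i).2 = (c j).2) →
    j = i + 1 ∨ i = j + 1)

lemma pI_asymm (G : PrefSystem I J) {m : I} {e f : I × J} (h : G.pI m e f) : ¬ G.pI m f e :=
  fun h' => G.pI_irrefl m e (G.pI_trans m e f e h h')

lemma pJ_asymm (G : PrefSystem I J) {w : J} {e f : I × J} (h : G.pJ w e f) : ¬ G.pJ w f e :=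
  fun h' => G.pJ_irrefl w e (G.pJ_trans w e f e h h')

lemma pI_flip (G : PrefSystem I J) {m : I} {e f : I × J} (he : e ∈ G.E) (hf : f ∈ G.E)
    (h1 : e.1 = m) (h2 : f.1 = m) (hne : e ≠ f) (h : ¬ G.pI m e f) : G.pI m f e :=
  (G.pI_total m e f he hf h1 h2 hne).resolve_left h

lemma pJ_flip (G : PrefSystem I J) {w : J} {e f : I × J} (he : e ∈ G.E) (hf : f ∈ G.E)
    (h1 : e.2 = w) (h2 : f.2 = w) (hne : e ≠ f) (h : ¬ G.pJ w e f) : G.pJ w f e :=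
  (G.pJ_total w e f he hf h1 h2 hne).resolve_left h

lemma unique1 (G : PrefSystem I J) {M : Finset (I × J)} (hM : IsMatching G M) {e f : I × J}
    (he : e ∈ M) (hf : f ∈ M) (h : e.1 = f.1) : e = f := by
  by_contra hne; exact (hM.2 e he f hf hne).1 h

lemma unique2 (G : PrefSystem I J) {M : Finset (I × J)} (hM : IsMatching G M) {e f : I × J}
    (he : e ∈ M) (hf : f ∈ M) (h : e.2 = f.2) : e = f := by
  by_contra hne; exact (hM.2 e he f hf hne).2 h

lemma exists_pI_max (G : PrefSystem I J) (m : I) (s : Finset (I × J)) (hs : s.Nonempty) :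
    (∀ e ∈ s, e ∈ G.E ∧ e.1 = m) → ∃ a ∈ s, ∀ b ∈ s, b = a ∨ G.pI m a b := by
  induction hs using Finset.Nonempty.cons_induction with
  | singleton a =>
    exact fun _ => ⟨a, Finset.mem_singleton_self a, fun b hb => Or.inl (Finset.mem_singleton.mp hb)⟩
  | cons a s ha hs ih =>
    intro hsub
    obtain ⟨x, hxs, hxmax⟩ := ih (fun e he => hsub e (Finset.mem_cons_of_mem he))
    have hax : a ≠ x := fun h => ha (h ▸ hxs)
    have haE := hsub a (Finset.mem_cons_self a s)
    have hxE := hsub x (Finset.mem_cons_of_mem hxs)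
    rcases G.pI_total m a x haE.1 hxE.1 haE.2 hxE.2 hax with hpax | hpxa
    · refine ⟨a, Finset.mem_cons_self a s, ?_⟩
      intro b hb
      rcases Finset.mem_cons.mp hb with rfl | hbs
      · exact Or.inl rfl
      · rcases hxmax b hbs with rfl | hpxb
        · exact Or.inr hpax
        · exact Or.inr (G.pI_trans m a x b hpax hpxb)
    · refine ⟨x, Finset.mem_cons_of_mem hxs, ?_⟩
      intro b hb
      rcases Finset.mem_cons.mp hb with rfl | hbs
      · exact Or.inr hpxa
      · exact hxmax b hbs

/-- A woman covered in `L` is covered in `M`, for stable `M`, `L`. -/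
lemma cover_women (G : PrefSystem I J) {M L : Finset (I × J)}
    (hM : IsStable G M) (hL : IsStable G L) {f0 : I × J} (hf0 : f0 ∈ L) :
    ∃ e ∈ M, e.2 = f0.2 := by
  classical
  by_contra hw0
  push_neg at hw0
  set R : (I × J) → Prop := fun e => e ∈ M ∧ e ∉ L ∧ ∃ f ∈ L, f.1 = e.1 ∧ G.pI e.1 e f with hR
  set Q : (I × J) → Prop :=
    fun e => R e ∧ ∀ f ∈ L, f.1 = e.1 → ∃ e' ∈ M, e'.2 = f.2 with hQ
  have hstep : ∀ e, R e → ∃ e1 f1, f1 ∈ L ∧ f1.2 = e.2 ∧ e1 ∈ M ∧ e1.1 = f1.1 ∧ R e1 := by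
    rintro e ⟨heM, heL, f, hfL, hf1, hpf⟩
    have hA : ∀ f' ∈ L, f'.1 = e.1 → G.pI e.1 e f' := by
      intro f' hf' h1
      have h2 : f' = f := unique1 G hL.1 hf' hfL (h1.trans hf1.symm)
      rwa [h2]
    have hnB : ¬ ∀ f' ∈ L, f'.2 = e.2 → G.pJ e.2 e f' := by
      intro hB; exact hL.2 e ⟨hM.1.1 heM, heL, hA, hB⟩
    push_neg at hnB
    obtain ⟨f1, hf1L, hf12, hnpJ⟩ := hnB
    have hne1 : e ≠ f1 := fun h => heL (h ▸ hf1L)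
    have hpJ : G.pJ e.2 f1 e := pJ_flip G (hM.1.1 heM) (hL.1.1 hf1L) rfl hf12 hne1 hnpJ
    have hf1M : f1 ∉ M := fun h => hne1 (unique2 G hM.1 heM h hf12.symm)
    have hB2 : ∀ e' ∈ M, e'.2 = f1.2 → G.pJ f1.2 f1 e' := by
      intro e' he' h2
      have h3 : e' = e := unique2 G hM.1 he' heM (h2.trans hf12)
      rw [h3, hf12]
      exact hpJ
    have hnA2 : ¬ ∀ f' ∈ M, f'.1 = f1.1 → G.pI f1.1 f1 f' := fun hA2 =>
      hM.2 f1 ⟨hL.1.1 hf1L, hf1M, hA2, hB2⟩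
    push_neg at hnA2
    obtain ⟨e1, he1M, he11, hnpI⟩ := hnA2
    have hne2 : f1 ≠ e1 := fun h => hf1M (h ▸ he1M)
    have hpI1 : G.pI f1.1 e1 f1 := pI_flip G (hL.1.1 hf1L) (hM.1.1 he1M) rfl he11 hne2 hnpI
    have he1L : e1 ∉ L := fun h => hne2 (unique1 G hL.1 hf1L h he11.symm)
    exact ⟨e1, f1, hf1L, hf12, he1M, he11,
      he1M, he1L, ⟨f1, hf1L, he11.symm, by rw [he11]; exact hpI1⟩⟩
  -- starting edge
  have hf0M : f0 ∉ M := fun h => hw0 f0 h rfl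
  have hB0 : ∀ e' ∈ M, e'.2 = f0.2 → G.pJ f0.2 f0 e' := fun e' he' h2 => absurd h2 (hw0 e' he')
  have hnA0 : ¬ ∀ f' ∈ M, f'.1 = f0.1 → G.pI f0.1 f0 f' := fun hA0 =>
    hM.2 f0 ⟨hL.1.1 hf0, hf0M, hA0, hB0⟩
  push_neg at hnA0
  obtain ⟨e0, he0M, he01, hnpI0⟩ := hnA0
  have hne0 : f0 ≠ e0 := fun h => hf0M (h ▸ he0M)
  have hpI0 : G.pI f0.1 e0 f0 := pI_flip G (hL.1.1 hf0) (hM.1.1 he0M) rfl he01 hne0 hnpI0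
  have he0L : e0 ∉ L := fun h => hne0 (unique1 G hL.1 hf0 h he01.symm)
  have hRe0 : R e0 := ⟨he0M, he0L, f0, hf0, he01.symm, by rw [he01]; exact hpI0⟩
  have hQe0 : ¬ Q e0 := by
    rintro ⟨-, hq⟩
    obtain ⟨e', he'M, he'2⟩ := hq f0 hf0 he01.symm
    exact hw0 e' he'M he'2
  -- counting
  choose φ ψ hψL hψ2 hφM hφ1 hφR using hstep
  have hφQ : ∀ e (he : R e), Q (φ e he) := by
    intro e he
    refine ⟨hφR e he, ?_⟩
    intro f hfL h1
    have h2 : f = ψ e he := unique1 G hL.1 hfL (hψL e he) (h1.trans (hφ1 e he))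
    exact ⟨e, he.1, by rw [h2, hψ2 e he]⟩
  set Rs : Finset (I × J) := G.E.filter R with hRs
  set Qs : Finset (I × J) := G.E.filter Q with hQs
  have hmemR : ∀ e, e ∈ Rs ↔ R e := fun e =>
    ⟨fun h => (Finset.mem_filter.mp h).2, fun h => Finset.mem_filter.mpr ⟨hM.1.1 h.1, h⟩⟩
  have hmemQ : ∀ e, e ∈ Qs ↔ Q e := fun e =>
    ⟨fun h => (Finset.mem_filter.mp h).2, fun h => Finset.mem_filter.mpr ⟨hM.1.1 h.1.1, h⟩⟩
  classical
  set F : (I × J) → (I × J) := fun e => if h : R e then φ e h else e with hF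
  have hFmaps : ∀ e ∈ Rs, F e ∈ Qs := by
    intro e he
    have hre := (hmemR e).mp he
    rw [hF]
    simp only [dif_pos hre]
    exact (hmemQ _).mpr (hφQ e hre)
  have hFinj : Set.InjOn F ↑Rs := by
    intro e he e' he' hFe
    have hre := (hmemR e).mp (he)
    have hre' := (hmemR e').mp (he')
    rw [hF] at hFe
    simp only [dif_pos hre, dif_pos hre'] at hFe
    have hψeq : ψ e hre = ψ e' hre' := by
      apply unique1 G hL.1 (hψL e hre) (hψL e' hre')
      rw [← hφ1 e hre, ← hφ1 e' hre', hFe]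
    apply unique2 G hM.1 hre.1 hre'.1
    rw [← hψ2 e hre, ← hψ2 e' hre', hψeq]
  have hcard1 : Rs.card ≤ Qs.card := Finset.card_le_card_of_injOn F hFmaps hFinj
  have hssub : Qs ⊂ Rs := by
    constructor
    · intro e he
      exact (hmemR e).mpr ((hmemQ e).mp he).1
    · intro hsup
      exact hQe0 ((hmemQ e0).mp (hsup ((hmemR e0).mpr hRe0)))
  have hcard2 : Qs.card < Rs.card := Finset.card_lt_card hssub
  omega

/-- A man covered in `L` is covered in `M`, for stable `M`, `L`. -/
lemma cover_men (G : PrefSystem I J) {M L : Finset (I × J)}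
    (hM : IsStable G M) (hL : IsStable G L) {f0 : I × J} (hf0 : f0 ∈ L) :
    ∃ e ∈ M, e.1 = f0.1 := by
  classical
  by_contra hw0
  push_neg at hw0
  set R : (I × J) → Prop := fun e => e ∈ M ∧ e ∉ L ∧ ∃ f ∈ L, f.2 = e.2 ∧ G.pJ e.2 e f with hR
  set Q : (I × J) → Prop :=
    fun e => R e ∧ ∀ f ∈ L, f.2 = e.2 → ∃ e' ∈ M, e'.1 = f.1 with hQ
  have hstep : ∀ e, R e → ∃ e1 f1, f1 ∈ L ∧ f1.1 = e.1 ∧ e1 ∈ M ∧ e1.2 = f1.2 ∧ R e1 := by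
    rintro e ⟨heM, heL, f, hfL, hf2, hpf⟩
    have hB : ∀ f' ∈ L, f'.2 = e.2 → G.pJ e.2 e f' := by
      intro f' hf' h2
      have h3 : f' = f := unique2 G hL.1 hf' hfL (h2.trans hf2.symm)
      rwa [h3]
    have hnA : ¬ ∀ f' ∈ L, f'.1 = e.1 → G.pI e.1 e f' := by
      intro hA; exact hL.2 e ⟨hM.1.1 heM, heL, hA, hB⟩
    push_neg at hnA
    obtain ⟨f1, hf1L, hf11, hnpI⟩ := hnA
    have hne1 : e ≠ f1 := fun h => heL (h ▸ hf1L)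
    have hpI : G.pI e.1 f1 e := pI_flip G (hM.1.1 heM) (hL.1.1 hf1L) rfl hf11 hne1 hnpI
    have hf1M : f1 ∉ M := fun h => hne1 (unique1 G hM.1 heM h hf11.symm)
    have hA2 : ∀ e' ∈ M, e'.1 = f1.1 → G.pI f1.1 f1 e' := by
      intro e' he' h1
      have h3 : e' = e := unique1 G hM.1 he' heM (h1.trans hf11)
      rw [h3, hf11]
      exact hpI
    have hnB2 : ¬ ∀ f' ∈ M, f'.2 = f1.2 → G.pJ f1.2 f1 f' := fun hB2 =>
      hM.2 f1 ⟨hL.1.1 hf1L, hf1M, hA2, hB2⟩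
    push_neg at hnB2
    obtain ⟨e1, he1M, he12, hnpJ⟩ := hnB2
    have hne2 : f1 ≠ e1 := fun h => hf1M (h ▸ he1M)
    have hpJ1 : G.pJ f1.2 e1 f1 := pJ_flip G (hL.1.1 hf1L) (hM.1.1 he1M) rfl he12 hne2 hnpJ
    have he1L : e1 ∉ L := fun h => hne2 (unique2 G hL.1 hf1L h he12.symm)
    exact ⟨e1, f1, hf1L, hf11, he1M, he12,
      he1M, he1L, ⟨f1, hf1L, he12.symm, by rw [he12]; exact hpJ1⟩⟩
  -- starting edge
  have hf0M : f0 ∉ M := fun h => hw0 f0 h rfl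
  have hA0 : ∀ e' ∈ M, e'.1 = f0.1 → G.pI f0.1 f0 e' := fun e' he' h1 => absurd h1 (hw0 e' he')
  have hnB0 : ¬ ∀ f' ∈ M, f'.2 = f0.2 → G.pJ f0.2 f0 f' := fun hB0 =>
    hM.2 f0 ⟨hL.1.1 hf0, hf0M, hA0, hB0⟩
  push_neg at hnB0
  obtain ⟨e0, he0M, he02, hnpJ0⟩ := hnB0
  have hne0 : f0 ≠ e0 := fun h => hf0M (h ▸ he0M)
  have hpJ0 : G.pJ f0.2 e0 f0 := pJ_flip G (hL.1.1 hf0) (hM.1.1 he0M) rfl he02 hne0 hnpJ0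
  have he0L : e0 ∉ L := fun h => hne0 (unique2 G hL.1 hf0 h he02.symm)
  have hRe0 : R e0 := ⟨he0M, he0L, f0, hf0, he02.symm, by rw [he02]; exact hpJ0⟩
  have hQe0 : ¬ Q e0 := by
    rintro ⟨-, hq⟩
    obtain ⟨e', he'M, he'1⟩ := hq f0 hf0 he02.symm
    exact hw0 e' he'M he'1
  -- counting
  choose φ ψ hψL hψ1 hφM hφ2 hφR using hstep
  have hφQ : ∀ e (he : R e), Q (φ e he) := by
    intro e he
    refine ⟨hφR e he, ?_⟩
    intro f hfL h2
    have h3 : f = ψ e he := unique2 G hL.1 hfL (hψL e he) (h2.trans (hφ2 e he))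
    exact ⟨e, he.1, by rw [h3, hψ1 e he]⟩
  set Rs : Finset (I × J) := G.E.filter R with hRs
  set Qs : Finset (I × J) := G.E.filter Q with hQs
  have hmemR : ∀ e, e ∈ Rs ↔ R e := fun e =>
    ⟨fun h => (Finset.mem_filter.mp h).2, fun h => Finset.mem_filter.mpr ⟨hM.1.1 h.1, h⟩⟩
  have hmemQ : ∀ e, e ∈ Qs ↔ Q e := fun e =>
    ⟨fun h => (Finset.mem_filter.mp h).2, fun h => Finset.mem_filter.mpr ⟨hM.1.1 h.1.1, h⟩⟩
  classical
  set F : (I × J) → (I × J) := fun e => if h : R e then φ e h else e with hF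
  have hFmaps : ∀ e ∈ Rs, F e ∈ Qs := by
    intro e he
    have hre := (hmemR e).mp he
    rw [hF]
    simp only [dif_pos hre]
    exact (hmemQ _).mpr (hφQ e hre)
  have hFinj : Set.InjOn F ↑Rs := by
    intro e he e' he' hFe
    have hre := (hmemR e).mp (he)
    have hre' := (hmemR e').mp (he')
    rw [hF] at hFe
    simp only [dif_pos hre, dif_pos hre'] at hFe
    have hψeq : ψ e hre = ψ e' hre' := by
      apply unique2 G hL.1 (hψL e hre) (hψL e' hre')
      rw [← hφ2 e hre, ← hφ2 e' hre', hFe]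
    apply unique1 G hM.1 hre.1 hre'.1
    rw [← hψ1 e hre, ← hψ1 e' hre', hψeq]
  have hcard1 : Rs.card ≤ Qs.card := Finset.card_le_card_of_injOn F hFmaps hFinj
  have hssub : Qs ⊂ Rs := by
    constructor
    · intro e he
      exact (hmemR e).mpr ((hmemQ e).mp he).1
    · intro hsup
      exact hQe0 ((hmemQ e0).mp (hsup ((hmemR e0).mpr hRe0)))
  have hcard2 : Qs.card < Rs.card := Finset.card_lt_card hssub
  omega

/-- `m` is covered by both `M` and `L`, with distinct edges. -/
def Strict (G : PrefSystem I J) (M L : Finset (I × J)) (m : I) : Prop :=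
  ∃ eM ∈ M, ∃ eL ∈ L, eM.1 = m ∧ eL.1 = m ∧ eM ≠ eL

lemma admissibleL (G : PrefSystem I J) {M L : Finset (I × J)}
    (hM : IsStable G M) (hL : IsStable G L) (hle : Preceq G M L)
    {eM eL : I × J} (heM : eM ∈ M) (heL : eL ∈ L) (h1 : eM.1 = eL.1) (hne : eM ≠ eL) :
    Admissible G M eL := by
  have hpI : G.pI eM.1 eM eL := (hle eM heM eL heL h1).resolve_left hne
  have heLM : eL ∉ M := fun h => hne (unique1 G hM.1 heM h h1)
  refine ⟨hL.1.1 heL, heLM, ⟨eM, heM, h1, by rw [← h1]; exact hpI⟩, ?_⟩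
  intro e' he' h2
  by_contra hnp
  have hne' : e' ≠ eL := fun h => heLM (h ▸ he')
  have hp' : G.pJ eL.2 e' eL := pJ_flip G (hL.1.1 heL) (hM.1.1 he') rfl h2 hne'.symm hnp
  have he'L : e' ∉ L := fun h => hne' (unique2 G hL.1 h heL h2)
  have hblk : Blocks G L e' := by
    refine ⟨hM.1.1 he', he'L, ?_, ?_⟩
    · intro f hf h1'
      rcases hle e' he' f hf h1'.symm with h | h
      · exact absurd hf (h ▸ he'L)
      · exact h
    · intro f hf h2'
      have h3 : f = eL := unique2 G hL.1 hf heL (h2'.trans h2)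
      rw [h3, h2]
      exact hp'
  exact hL.2 e' hblk

lemma active_exists (G : PrefSystem I J) {M L : Finset (I × J)}
    (hM : IsStable G M) (hL : IsStable G L) (hle : Preceq G M L)
    {eM eL : I × J} (heM : eM ∈ M) (heL : eL ∈ L) (h1 : eM.1 = eL.1) (hne : eM ≠ eL) :
    ∃ a, ActiveEdge G M a ∧ a.1 = eL.1 := by
  classical
  set s := G.E.filter (fun e => Admissible G M e ∧ e.1 = eL.1) with hs
  have hmem : ∀ e, e ∈ s ↔ Admissible G M e ∧ e.1 = eL.1 := fun e =>
    ⟨fun h => (Finset.mem_filter.mp h).2, fun h => Finset.mem_filter.mpr ⟨h.1.1, h⟩⟩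
  have hsne : s.Nonempty := ⟨eL, (hmem eL).mpr ⟨admissibleL G hM hL hle heM heL h1 hne, rfl⟩⟩
  obtain ⟨a, has, hmax⟩ := exists_pI_max G eL.1 s hsne
    (fun e he => ⟨((hmem e).mp he).1.1, ((hmem e).mp he).2⟩)
  obtain ⟨haAdm, ha1⟩ := (hmem a).mp has
  refine ⟨a, ⟨haAdm, ?_⟩, ha1⟩
  intro b hb hb1
  have hbs : b ∈ s := (hmem b).mpr ⟨hb, hb1.trans ha1⟩
  rcases hmax b hbs with h | h
  · exact Or.inl h
  · rw [ha1]; exact Or.inr h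

lemma next_strict (G : PrefSystem I J) {M L : Finset (I × J)}
    (hM : IsStable G M) (hL : IsStable G L) (hle : Preceq G M L)
    {m : I} {a eM eL : I × J} (ha : ActiveEdge G M a) (ha1 : a.1 = m)
    (heM : eM ∈ M) (heL : eL ∈ L) (h1 : eM.1 = m) (h2 : eL.1 = m) (h3 : eM ≠ eL) :
    ∃ e' ∈ M, e'.2 = a.2 ∧ Strict G M L e'.1 := by
  obtain ⟨hadm, hmax⟩ := ha
  obtain ⟨haE, haM, hman, hwom⟩ := hadm
  have hf : ∃ f ∈ L, f.2 = a.2 ∧ f ∉ M := by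
    by_cases haL : a ∈ L
    · exact ⟨a, haL, rfl, haM⟩
    · have hA : ∀ f' ∈ L, f'.1 = a.1 → G.pI a.1 a f' := by
        intro f' hf' hf'1
        have hfeL : f' = eL := unique1 G hL.1 hf' heL (hf'1.trans (ha1.trans h2.symm))
        subst hfeL
        have hadm' : Admissible G M f' := admissibleL G hM hL hle heM heL (h1.trans h2.symm) h3
        rcases hmax f' hadm' (h2.trans ha1.symm) with h | h
        · exact absurd (h ▸ hf') haL
        · exact h
      have hnB : ¬ ∀ f' ∈ L, f'.2 = a.2 → G.pJ a.2 a f' := fun hB =>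
        hL.2 a ⟨haE, haL, hA, hB⟩
      push_neg at hnB
      obtain ⟨f, hfL, hf2, hnpJ⟩ := hnB
      exact ⟨f, hfL, hf2, fun hfM => hnpJ (hwom f hfM hf2)⟩
  obtain ⟨f, hfL, hf2, hfM⟩ := hf
  obtain ⟨e', he'M, he'2⟩ := cover_women G hM hL hfL
  have he'a : e'.2 = a.2 := he'2.trans hf2
  obtain ⟨fL', hfL', hfL'1⟩ := cover_men G hL hM he'M
  have hne' : fL' ≠ e' := by
    intro h
    have : e' = f := unique2 G hL.1 (h ▸ hfL') hfL he'2
    exact hfM (this ▸ he'M)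
  exact ⟨e', he'M, he'a, e', he'M, fL', hfL', rfl, hfL'1, fun h => hne' h.symm⟩

/-- if `M ≺ L` are stable matchings, there is a rotation `c` in
the active graph `Γ(M)` such that the stable matching `M'` obtained by
exchanging `M` along `c` satisfies `M' ≼ L`. -/
theorem rotation_towards {I J : Type} [Fintype I] [Fintype J]
    [DecidableEq I] [DecidableEq J] (G : PrefSystem I J)
    (M L : Finset (I × J)) (hM : IsStable G M) (hL : IsStable G L)
    (hle : Preceq G M L) (hne : M ≠ L) :
    ∃ (k : ℕ) (c : ZMod k → I × J) (M' : Finset (I × J)),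
      IsRotation G M k c ∧
      (∀ e : I × J, e ∈ M' ↔
        ((e ∈ M ∧ ¬ ∃ i, c i = e) ∨ (e ∉ M ∧ ∃ i, c i = e))) ∧
      IsStable G M' ∧ Preceq G M' L := by
  classical
  -- a strict man exists
  have hstrict_ex : ∃ m, Strict G M L m := by
    have hdiff : ∃ e : I × J, ¬ (e ∈ M ↔ e ∈ L) := by
      by_contra h
      push_neg at h
      exact hne (Finset.ext fun e => h e)
    obtain ⟨e, he⟩ := hdiff
    by_cases heM : e ∈ M
    · have heL : e ∉ L := fun h => he ⟨fun _ => h, fun _ => heM⟩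
      obtain ⟨g, hgL, hg1⟩ := cover_men G hL hM heM
      exact ⟨e.1, e, heM, g, hgL, rfl, hg1, fun h => heL (h ▸ hgL)⟩
    · have heL : e ∈ L := by
        by_contra h
        exact he ⟨fun h' => absurd h' heM, fun h' => absurd h' h⟩
      obtain ⟨g, hgM, hg1⟩ := cover_men G hM hL heL
      exact ⟨e.1, g, hgM, e, heL, hg1, rfl, fun h => heM (h ▸ hgM)⟩
  -- the subtype of strict men and the basic functions on it
  set Sub := {m : I // Strict G M L m} with hSubdef
  haveI : Finite Sub := Subtype.finite
  have hMed0 : ∀ x : Sub, ∃ e, e ∈ M ∧ e.1 = x.1 := by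
    rintro ⟨m, eM, heM, eL, heL, h1, h2, h3⟩
    exact ⟨eM, heM, h1⟩
  choose Med hMedM hMed1 using hMed0
  have hact0 : ∀ x : Sub, ∃ a, ActiveEdge G M a ∧ a.1 = x.1 := by
    rintro ⟨m, hm⟩
    obtain ⟨eM, heM, eL, heL, h1, h2, h3⟩ := hm
    obtain ⟨a, ha, ha1⟩ := active_exists G hM hL hle heM heL (h1.trans h2.symm) h3
    exact ⟨a, ha, ha1.trans h2⟩
  choose act hact hact1 using hact0
  have hactAdm : ∀ x : Sub, Admissible G M (act x) := fun x => (hact x).1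
  have hnxt0 : ∀ x : Sub, ∃ y : Sub, (Med y).2 = (act x).2 := by
    intro x
    obtain ⟨eM, heM, eL, heL, h1, h2, h3⟩ := x.2
    obtain ⟨e', he'M, he'2, hstr⟩ := next_strict G hM hL hle (hact x) (hact1 x) heM heL h1 h2 h3
    refine ⟨⟨e'.1, hstr⟩, ?_⟩
    have hMede : Med ⟨e'.1, hstr⟩ = e' := unique1 G hM.1 (hMedM _) he'M (hMed1 _)
    rw [hMede, he'2]
  choose nxt hnxt using hnxt0
  -- the iterated sequence and the cycle
  obtain ⟨m0, hm0⟩ := hstrict_ex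
  set seq : ℕ → Sub := fun n => nxt^[n] ⟨m0, hm0⟩ with hseqdef
  have hseqS : ∀ n, seq (n + 1) = nxt (seq n) := fun n => Function.iterate_succ_apply' nxt n _
  have hrep : ∃ n, ∃ i, i < n ∧ seq i = seq n := by
    obtain ⟨a, b, hab, he⟩ := Finite.exists_ne_map_eq_of_infinite seq
    rcases Nat.lt_or_ge a b with h | h
    · exact ⟨b, a, h, he⟩
    · exact ⟨a, b, by omega, he.symm⟩
  set j0 := Nat.find hrep with hj0
  obtain ⟨i0, hi0, heq0⟩ := Nat.find_spec hrep
  have hmin : ∀ n, n < j0 → ∀ i, i < n → seq i ≠ seq n := by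
    intro n hn i hin h
    exact Nat.find_min hrep hn ⟨i, hin, h⟩
  set p := j0 - i0 with hpdef
  have hp : 0 < p := by omega
  have hper : seq (i0 + p) = seq i0 := by
    rw [show i0 + p = j0 from by omega]
    exact heq0.symm
  set μ : ℕ → Sub := fun t => seq (i0 + t % p) with hμdef
  have hμval : ∀ t, μ t = seq (i0 + t % p) := fun t => by rw [hμdef]
  have hμeq : ∀ t s, t % p = s % p → μ t = μ s := by
    intro t s h
    rw [hμval, hμval, h]
  have hμmod : ∀ t, μ (t % p) = μ t :=
    fun t => hμeq _ _ (Nat.mod_eq_of_lt (Nat.mod_lt _ hp))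
  have hμnext : ∀ t, nxt (μ t) = μ (t + 1) := by
    intro t
    have h1 : t % p < p := Nat.mod_lt _ hp
    have h2 : (t + 1) % p = (t % p + 1) % p := (Nat.mod_add_mod t p 1).symm
    by_cases h : t % p + 1 < p
    · have h3 : (t + 1) % p = t % p + 1 := by rw [h2, Nat.mod_eq_of_lt h]
      rw [hμval, hμval, h3, show i0 + (t % p + 1) = (i0 + t % p) + 1 from by omega, hseqS]
    · have h4 : t % p + 1 = p := by omega
      have h3 : (t + 1) % p = 0 := by rw [h2, h4, Nat.mod_self]
      rw [hμval, hμval, h3, Nat.add_zero, ← hper,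
        show i0 + p = (i0 + t % p) + 1 from by omega, hseqS]
  have hμinj : ∀ t s, μ t = μ s → t % p = s % p := by
    intro t s h
    rw [hμval, hμval] at h
    have key : ∀ u v, u < v → v < p → seq (i0 + u) ≠ seq (i0 + v) := by
      intro u v huv hv hequ
      exact hmin (i0 + v) (by omega) (i0 + u) (by omega) hequ
    have ht : t % p < p := Nat.mod_lt _ hp
    have hs : s % p < p := Nat.mod_lt _ hp
    by_contra hne2
    rcases Nat.lt_or_ge (t % p) (s % p) with hlt | hge
    · exact key _ _ hlt hs h
    · exact key _ _ (by omega) ht h.symm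
  -- the rotation
  set k := 2 * p with hkdef
  have hk2 : 2 ≤ k := by omega
  haveI : NeZero k := ⟨by omega⟩
  set d : ℕ → I × J := fun a => if a % 2 = 0 then Med (μ (a / 2)) else act (μ (a / 2)) with hddef
  set c : ZMod k → I × J := fun z => d z.val with hcdef
  have hcval : ∀ z : ZMod k, c z = d z.val := fun z => by rw [hcdef]
  have hval_lt : ∀ z : ZMod k, z.val < k := fun z => ZMod.val_lt z
  have hcast : ∀ a : ℕ, a < k → ((a : ZMod k)).val = a := fun a ha => ZMod.val_cast_of_lt ha
  have hone : (1 : ZMod k).val = 1 := by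
    rw [show (1 : ZMod k) = ((1 : ℕ) : ZMod k) from by norm_cast]
    exact hcast 1 (by omega)
  have hvadd : ∀ z : ZMod k, (z + 1).val = (z.val + 1) % k := by
    intro z
    rw [ZMod.val_add, hone]
  have hvinj : ∀ z z' : ZMod k, z.val = z'.val → z = z' :=
    fun z z' h => ZMod.val_injective k h
  have hd_even : ∀ t, d (2 * t) = Med (μ t) := by
    intro t
    have h1 : 2 * t % 2 = 0 := by omega
    have h2 : 2 * t / 2 = t := by omega
    simp [hddef, h1, h2]
  have hd_odd : ∀ t, d (2 * t + 1) = act (μ t) := by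
    intro t
    have h1 : (2 * t + 1) % 2 = 1 := by omega
    have h2 : (2 * t + 1) / 2 = t := by omega
    simp [hddef, h1, h2]
  have hdM : ∀ a, a % 2 = 0 → d a ∈ M := by
    intro a h
    simp [hddef, h]; exact hMedM _
  have hdMe : ∀ a, a % 2 = 0 → d a = Med (μ (a / 2)) := by
    intro a h
    simp [hddef, h]
  have hdAe : ∀ a, a % 2 ≠ 0 → d a = act (μ (a / 2)) := by
    intro a h
    simp [hddef, h]
  have hdM' : ∀ a, a % 2 ≠ 0 → d a ∉ M := by
    intro a h
    rw [hdAe a h]; exact (hactAdm _).2.1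
  have hd1 : ∀ a, (d a).1 = (μ (a / 2)).1 := by
    intro a
    by_cases h : a % 2 = 0
    · rw [hdMe a h, hMed1]
    · rw [hdAe a h, hact1]
  have hactw : ∀ t, (act (μ t)).2 = (Med (μ (t + 1))).2 := by
    intro t
    rw [← hμnext t]
    exact (hnxt (μ t)).symm
  have hd2 : ∀ a, (d a).2 = (Med (μ (a / 2 + a % 2))).2 := by
    intro a
    by_cases h : a % 2 = 0
    · rw [hdMe a h, h, Nat.add_zero]
    · rw [hdAe a h, hactw, show a % 2 = 1 from by omega]
  have hμMed : ∀ t s, Med (μ t) = Med (μ s) → t % p = s % p := by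
    intro t s h
    exact hμinj _ _ (Subtype.ext (by rw [← hMed1 (μ t), ← hMed1 (μ s), h]))
  have hμact : ∀ t s, act (μ t) = act (μ s) → t % p = s % p := by
    intro t s h
    exact hμinj _ _ (Subtype.ext (by rw [← hact1 (μ t), ← hact1 (μ s), h]))
  have hdinj : ∀ a b, a < k → b < k → d a = d b → a = b := by
    intro a b ha hb h
    by_cases h1 : a % 2 = 0 <;> by_cases h2 : b % 2 = 0
    · rw [hdMe a h1, hdMe b h2] at h
      have h3 := hμMed _ _ h
      rw [Nat.mod_eq_of_lt (show a / 2 < p from by omega),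
        Nat.mod_eq_of_lt (show b / 2 < p from by omega)] at h3
      omega
    · exfalso; exact (hdM' b h2) (h ▸ hdM a h1)
    · exfalso; exact (hdM' a h1) (h ▸ hdM b h2)
    · rw [hdAe a h1, hdAe b h2] at h
      have h3 := hμact _ _ h
      rw [Nat.mod_eq_of_lt (show a / 2 < p from by omega),
        Nat.mod_eq_of_lt (show b / 2 < p from by omega)] at h3
      omega
  have hcinj : Function.Injective c := by
    intro z z' h
    rw [hcval, hcval] at h
    exact hvinj _ _ (hdinj _ _ (hval_lt z) (hval_lt z') h)
  have hsuccval : ∀ z : ZMod k, c (z + 1) = d (z.val + 1) := by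
    intro z
    rw [hcval, hvadd]
    rcases Nat.lt_or_ge (z.val + 1) k with h | h
    · rw [Nat.mod_eq_of_lt h]
    · have hzk : z.val + 1 = k := by have := hval_lt z; omega
      rw [hzk, Nat.mod_self]
      have e0 : d 0 = Med (μ 0) := by have := hd_even 0; rwa [Nat.mul_zero] at this
      have ek : d k = Med (μ p) := by rw [hkdef]; exact hd_even p
      rw [e0, ek, hμeq 0 p (by rw [Nat.zero_mod, Nat.mod_self])]
  -- rotation conditions
  have hGamma : ∀ i : ZMod k, InGamma G M (c i) := by
    intro i
    by_cases h : i.val % 2 = 0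
    · exact Or.inl (hcval i ▸ hdM _ h)
    · refine Or.inr ?_
      rw [hcval, hdAe _ h]
      exact hact _
  have hconsec : ∀ i : ZMod k, (c i).1 = (c (i + 1)).1 ∨ (c i).2 = (c (i + 1)).2 := by
    intro i
    rw [hcval, hsuccval]
    by_cases h : i.val % 2 = 0
    · left
      rw [hd1, hd1, show (i.val + 1) / 2 = i.val / 2 from by omega]
    · right
      rw [hd2, hd2, show i.val / 2 + i.val % 2 = i.val / 2 + 1 from by omega,
        show (i.val + 1) / 2 + (i.val + 1) % 2 = i.val / 2 + 1 from by omega]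
  have halt : ∀ i : ZMod k, (c i ∈ M ↔ c (i + 1) ∉ M) := by
    intro i
    rw [hcval, hsuccval]
    by_cases h : i.val % 2 = 0
    · exact iff_of_true (hdM _ h) (hdM' _ (by omega))
    · exact iff_of_false (hdM' _ h) (not_not_intro (hdM _ (by omega)))
  have hstep2 : ∀ u v : ZMod k, u.val + 1 = v.val → v = u + 1 := by
    intro u v h
    refine (hvinj _ _ ?_).symm
    rw [hvadd, h, Nat.mod_eq_of_lt (hval_lt v)]
  have hwrap : ∀ u v : ZMod k, u.val = k - 1 → v.val = 0 → v = u + 1 := by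
    intro u v h h'
    refine (hvinj _ _ ?_).symm
    rw [hvadd, h, h', show k - 1 + 1 = k from by omega, Nat.mod_self]
  have hnoncons : ∀ i j : ZMod k, i ≠ j → ((c i).1 = (c j).1 ∨ (c i).2 = (c j).2) →
      j = i + 1 ∨ i = j + 1 := by
    intro i j hij hshare
    have ha : i.val < k := hval_lt i
    have hb : j.val < k := hval_lt j
    have hab : i.val ≠ j.val := fun h => hij (hvinj _ _ h)
    rcases hshare with h | h
    · -- same man
      rw [hcval, hcval, hd1, hd1] at h
      have h3 := hμinj _ _ (Subtype.ext h)
      rw [Nat.mod_eq_of_lt (show i.val / 2 < p from by omega),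
        Nat.mod_eq_of_lt (show j.val / 2 < p from by omega)] at h3
      rcases (show j.val = i.val + 1 ∨ i.val = j.val + 1 from by omega) with h4 | h4
      · exact Or.inl (hstep2 i j h4.symm)
      · exact Or.inr (hstep2 j i h4.symm)
    · -- same woman
      rw [hcval, hcval, hd2, hd2] at h
      have hMeq : Med (μ (i.val / 2 + i.val % 2)) = Med (μ (j.val / 2 + j.val % 2)) :=
        unique2 G hM.1 (hMedM _) (hMedM _) h
      have hmod := hμMed _ _ hMeq
      have hi2 : i.val / 2 < p := by omega
      have hj2 : j.val / 2 < p := by omega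
      by_cases h1 : i.val % 2 = 0 <;> by_cases h2 : j.val % 2 = 0
      · exfalso
        rw [h1, h2, Nat.add_zero, Nat.add_zero, Nat.mod_eq_of_lt hi2,
          Nat.mod_eq_of_lt hj2] at hmod
        omega
      · -- i even, j odd : i = j + 1
        rw [h1, Nat.add_zero, Nat.mod_eq_of_lt hi2, show j.val % 2 = 1 from by omega] at hmod
        rcases Nat.lt_or_ge (j.val / 2 + 1) p with h4 | h4
        · rw [Nat.mod_eq_of_lt h4] at hmod
          exact Or.inr (hstep2 j i (by omega))
        · rw [show j.val / 2 + 1 = p from by omega, Nat.mod_self] at hmod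
          exact Or.inr (hwrap j i (by omega) (by omega))
      · -- i odd, j even : j = i + 1
        rw [h2, Nat.add_zero, Nat.mod_eq_of_lt hj2, show i.val % 2 = 1 from by omega] at hmod
        rcases Nat.lt_or_ge (i.val / 2 + 1) p with h4 | h4
        · rw [Nat.mod_eq_of_lt h4] at hmod
          exact Or.inl (hstep2 i j (by omega))
        · rw [show i.val / 2 + 1 = p from by omega, Nat.mod_self] at hmod
          exact Or.inl (hwrap i j (by omega) (by omega))
      · exfalso
        rw [show i.val % 2 = 1 from by omega, show j.val % 2 = 1 from by omega] at hmod
        have h5 : i.val / 2 = j.val / 2 := by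
          rcases Nat.lt_or_ge (i.val / 2 + 1) p with h4 | h4 <;>
            rcases Nat.lt_or_ge (j.val / 2 + 1) p with h6 | h6
          · rw [Nat.mod_eq_of_lt h4, Nat.mod_eq_of_lt h6] at hmod; omega
          · rw [Nat.mod_eq_of_lt h4, show j.val / 2 + 1 = p from by omega,
              Nat.mod_self] at hmod; omega
          · rw [show i.val / 2 + 1 = p from by omega, Nat.mod_self,
              Nat.mod_eq_of_lt h6] at hmod; omega
          · omega
        omega
  -- the new matching M'
  set M' : Finset (I × J) :=
      (M.filter (fun e => ¬ ∃ i : ZMod k, c i = e)) ∪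
        ((Finset.univ.image c).filter (fun e => e ∉ M)) with hM'def
  have hM'mem : ∀ e, e ∈ M' ↔ ((e ∈ M ∧ ¬ ∃ i, c i = e) ∨ (e ∉ M ∧ ∃ i, c i = e)) := by
    intro e
    rw [hM'def]
    simp only [Finset.mem_union, Finset.mem_filter, Finset.mem_image, Finset.mem_univ, true_and]
    tauto
  have hcyc : ∀ e, (∃ i : ZMod k, c i = e) ↔ (∃ t, e = Med (μ t) ∨ e = act (μ t)) := by
    intro e
    constructor
    · rintro ⟨i, rfl⟩
      refine ⟨i.val / 2, ?_⟩
      by_cases h : i.val % 2 = 0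
      · left; rw [hcval, hdMe _ h]
      · right; rw [hcval, hdAe _ h]
    · rintro ⟨t, h | h⟩
      · refine ⟨((2 * (t % p) : ℕ) : ZMod k), ?_⟩
        rw [hcval, hcast _ (by have := Nat.mod_lt t hp; omega), hd_even, h, hμmod]
      · refine ⟨((2 * (t % p) + 1 : ℕ) : ZMod k), ?_⟩
        rw [hcval, hcast _ (by have := Nat.mod_lt t hp; omega), hd_odd, h, hμmod]
  have hact_M' : ∀ t, act (μ t) ∈ M' := fun t =>
    (hM'mem _).mpr (Or.inr ⟨(hactAdm _).2.1, (hcyc _).mpr ⟨t, Or.inr rfl⟩⟩)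
  have hMed_nM' : ∀ t, Med (μ t) ∉ M' := by
    intro t h
    rcases (hM'mem _).mp h with ⟨-, hno⟩ | ⟨hnm, -⟩
    · exact hno ((hcyc _).mpr ⟨t, Or.inl rfl⟩)
    · exact hnm (hMedM _)
  have hMM' : ∀ e, e ∈ M → e ∉ M' → ∃ t, e = Med (μ t) := by
    intro e heM heM'
    by_contra hno
    push_neg at hno
    apply heM'
    refine (hM'mem _).mpr (Or.inl ⟨heM, ?_⟩)
    intro hex
    obtain ⟨t, h | h⟩ := (hcyc _).mp hex
    · exact hno t h
    · rw [h] at heM; exact (hactAdm _).2.1 heM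
  have hM'M : ∀ e, e ∈ M' → e ∉ M → ∃ t, e = act (μ t) := by
    intro e heM' heM
    rcases (hM'mem _).mp heM' with ⟨h, -⟩ | ⟨-, hex⟩
    · exact absurd h heM
    · obtain ⟨t, h | h⟩ := (hcyc _).mp hex
      · rw [h] at heM; exact absurd (hMedM _) heM
      · exact ⟨t, h⟩
  have hM'in : ∀ e, e ∈ M' → e ∈ M ∨ ∃ t, e = act (μ t) := by
    intro e he
    by_cases h : e ∈ M
    · exact Or.inl h
    · exact Or.inr (hM'M e he h)
  have hM'E : M' ⊆ G.E := by
    intro e he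
    rcases hM'in e he with h | ⟨t, rfl⟩
    · exact hM.1.1 h
    · exact (hactAdm _).1
  have huncyc : ∀ e, e ∈ M → e ∈ M' → ∀ t, e ≠ Med (μ t) := by
    intro e heM heM' t h
    rw [h] at heM'
    exact hMed_nM' t heM'
  have hM'match : IsMatching G M' := by
    refine ⟨hM'E, ?_⟩
    intro e he f hf hnef
    constructor
    · intro h1
      rcases hM'in e he with heM | ⟨t, rfl⟩ <;> rcases hM'in f hf with hfM | ⟨s, rfl⟩
      · exact (hM.1.2 e heM f hfM hnef).1 h1
      · exact huncyc e heM he s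
          (unique1 G hM.1 heM (hMedM _) (by rw [hMed1, ← hact1 (μ s), ← h1]))
      · exact huncyc f hfM hf t
          (unique1 G hM.1 hfM (hMedM _) (by rw [hMed1, ← hact1 (μ t), h1]))
      · exact hnef (by rw [show μ t = μ s from
          Subtype.ext (by rw [← hact1 (μ t), ← hact1 (μ s), h1])])
    · intro h2
      rcases hM'in e he with heM | ⟨t, rfl⟩ <;> rcases hM'in f hf with hfM | ⟨s, rfl⟩
      · exact (hM.1.2 e heM f hfM hnef).2 h2
      · exact huncyc e heM he (s + 1)
          (unique2 G hM.1 heM (hMedM _) (by rw [← hactw, ← h2]))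
      · exact huncyc f hfM hf (t + 1)
          (unique2 G hM.1 hfM (hMedM _) (by rw [← hactw, h2]))
      · have hMeq : Med (μ (t + 1)) = Med (μ (s + 1)) :=
          unique2 G hM.1 (hMedM _) (hMedM _) (by rw [← hactw, ← hactw, h2])
        have h3 : (t + 1) % p = (s + 1) % p := hμMed _ _ hMeq
        have h4 : t % p = s % p := Nat.ModEq.add_right_cancel' 1 h3
        exact hnef (by rw [hμeq _ _ h4])
  -- stability of M'
  have hM'stable : ∀ b, ¬ Blocks G M' b := by
    rintro b ⟨hbE, hbM', hbman, hbwom⟩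
    have step1 : ∀ f ∈ M, f.2 = b.2 → G.pJ b.2 b f := by
      intro f hfM hf2
      by_cases hf' : f ∈ M'
      · exact hbwom f hf' hf2
      · obtain ⟨t, rfl⟩ := hMM' f hfM hf'
        have hg2 : (act (μ (t + p - 1))).2 = (Med (μ t)).2 := by
          rw [hactw, show t + p - 1 + 1 = t + p from by omega,
            hμeq (t + p) t (Nat.add_mod_right t p)]
        have hpj1 : G.pJ b.2 b (act (μ (t + p - 1))) :=
          hbwom _ (hact_M' _) (hg2.trans hf2)
        have hpj2 : G.pJ (act (μ (t + p - 1))).2 (act (μ (t + p - 1))) (Med (μ t)) :=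
          (hactAdm _).2.2.2 _ (hMedM _) hg2.symm
        rw [hg2, hf2] at hpj2
        exact G.pJ_trans b.2 b _ _ hpj1 hpj2
    have step2 : b ∉ M := by
      intro hbM
      exact G.pJ_irrefl b.2 b (step1 b hbM rfl)
    have step3 : ∃ f, f ∈ M ∧ f.1 = b.1 ∧ G.pI b.1 f b := by
      by_contra hno
      push_neg at hno
      have hman : ∀ f ∈ M, f.1 = b.1 → G.pI b.1 b f := by
        intro f hfM h1
        have hne2 : f ≠ b := fun h => step2 (h ▸ hfM)
        exact pI_flip G (hM.1.1 hfM) hbE h1 rfl hne2 (hno f hfM h1)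
      exact hM.2 b ⟨hbE, step2, hman, step1⟩
    obtain ⟨f, hfM, hf1, hfb⟩ := step3
    have step4 : Admissible G M b := ⟨hbE, step2, ⟨f, hfM, hf1, hfb⟩, step1⟩
    by_cases hf' : f ∈ M'
    · exact pI_asymm G hfb (hbman f hf' hf1)
    · obtain ⟨t, rfl⟩ := hMM' f hfM hf'
      have hb1 : b.1 = (act (μ t)).1 := by rw [hact1, ← hMed1 (μ t), hf1]
      have hpib : G.pI b.1 b (act (μ t)) :=
        hbman _ (hact_M' t) ((hact1 _).trans ((hMed1 _).symm.trans hf1))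
      rcases (hact (μ t)).2 b step4 hb1 with h | h
      · exact hbM' (by rw [h]; exact hact_M' t)
      · rw [← hb1] at h
        exact pI_asymm G hpib h
  -- M' ≼ L
  have hM'le : Preceq G M' L := by
    intro e he f hfL h1
    rcases hM'in e he with heM | ⟨t, rfl⟩
    · exact hle e heM f hfL h1
    · obtain ⟨eM, heM, eL, heL, he1, he2, hne3⟩ := (μ t).2
      have hfeL : f = eL :=
        unique1 G hL.1 hfL heL ((h1.symm.trans (hact1 _)).trans he2.symm)
      subst hfeL
      have hadm' : Admissible G M f := admissibleL G hM hL hle heM hfL (he1.trans he2.symm) hne3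
      rcases (hact (μ t)).2 f hadm' (he2.trans (hact1 _).symm) with h | h
      · exact Or.inl h.symm
      · exact Or.inr h
  exact ⟨k, c, M', ⟨hk2, hcinj, hGamma, hconsec, halt, hnoncons⟩, hM'mem,
    ⟨hM'match, hM'stable⟩, hM'le⟩
end
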